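/- arXiv:1905.13655 — 12 statements merged into one kernel-verified Lean document; each statement's English description precedes it below -/
import Mathlib

section
/- Let A₁, …, A_m ∈ ℝ^{d×d} be symmetric, pairwise commuting, linearly independent matrices and y₁, …, y_m ∈ ℝ. For each α > 0 let Z_α : [0,∞) → ℝ^{d×d} be differentiable with Z_α(0) = α·I and, for all t ≥ 0, Z_α′(t) = −2·(Σ_{i=1}^m (⟨A_i, Z_α(t)·Z_α(t)ᵀ⟩ − y_i)·A_i)·Z_α(t) (gradient flow on Z ↦ ℓ(Z Zᵀ) initialized at α·I). Assume that for every α > 0 the limit W_∞(α) := lim_{t→∞} Z_α(t)·Z_α(t)ᵀ exists, that the limit W̄ := lim_{α→0⁺} W_∞(α) exists, that W̄ is positive semidefinite, and that ⟨A_i, W̄⟩ = y_i for all i. Then W̄ has minimal nuclear norm among feasible positive semidefinite matrices: for every positive semidefinite W ∈ ℝ^{d×d} with ⟨A_i, W⟩ = y_i for all i, tr(W̄) ≤ tr(W). -/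
/-!
Commuting symmetric `Aᵢ` are diagonal in a common orthonormal basis `U`. In that basis the flow
decouples: `Uᵀ Z U` stays diagonal, and `Uᵀ Z Zᵀ U = diag (α² exp (Λᵀ c))` for some `c ∈ ℝᵐ`
depending on `t`, where `Λ` collects the eigenvalues `λᵢₖ`. Let `b`, `q` be the diagonals of
`Uᵀ W̄ U` and `Uᵀ W U`; feasibility says `Λ b = Λ q`, so every `v = α² exp (Λᵀ c)` satisfies
`∑ₖ log vₖ (qₖ - bₖ) = -2 log α (∑ b - ∑ q)`. For `v` close to `b` (`α` small, `t` large) the left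
side is bounded above, because `q ≥ 0` and `log vₖ` stays bounded near every `bₖ > 0`, while
`-2 log α → ∞`. Hence `∑ b ≤ ∑ q`, i.e. `tr W̄ ≤ tr W`.
-/

open Matrix Filter Topology

/-- The Frobenius gradient of the loss `ℓ(W) = ½ Σᵢ (yᵢ − ⟨Aᵢ, W⟩)²`, where
`⟨A, W⟩ = tr(Aᵀ W)` is the Frobenius inner product. -/
noncomputable def gradLoss {d m : ℕ} (A : Fin m → Matrix (Fin d) (Fin d) ℝ)
    (y : Fin m → ℝ) (W : Matrix (Fin d) (Fin d) ℝ) : Matrix (Fin d) (Fin d) ℝ :=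
  ∑ i, ((((A i)ᵀ * W).trace) - y i) • A i

namespace Matrix

variable {n : Type*} [Fintype n]

theorem hasDerivAt_mul_mul_apply {Z : ℝ → Matrix n n ℝ} {Z' : Matrix n n ℝ} {t : ℝ}
    (hZ : ∀ a b, HasDerivAt (fun s => Z s a b) (Z' a b) t)
    (P Q : Matrix n n ℝ) (p q : n) :
    HasDerivAt (fun s => (P * Z s * Q) p q) ((P * Z' * Q) p q) t := by
  simp only [mul_apply]
  exact HasDerivAt.fun_sum fun b _ =>
    (HasDerivAt.fun_sum fun a _ => (hZ a b).const_mul _).mul_const _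

variable [DecidableEq n]

theorem exists_orthonormalBasis_mulVec_eq_smul_of_commute {ι : Type*} (A : ι → Matrix n n ℝ)
    (hA : ∀ i, (A i).IsSymm) (hC : ∀ i j, Commute (A i) (A j)) :
    ∃ (b : OrthonormalBasis n ℝ (EuclideanSpace ℝ n)) (μ : n → ι → ℝ),
      ∀ k i, A i *ᵥ b k = μ k i • b k := by
  classical
  set T : ι → Module.End ℝ (EuclideanSpace ℝ n) := fun i => (A i).toEuclideanLin
  have hT : ∀ i, (T i).IsSymmetric := fun i =>
    isSymmetric_toEuclideanLin_iff.mpr (isHermitian_iff_isSymm.mpr (hA i))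
  have hTC : Pairwise (Function.onFun Commute T) := fun i j _ => by
    ext x : 1
    rw [Module.End.mul_apply, Module.End.mul_apply, ← LinearMap.comp_apply, ← toLpLin_mul_same,
      (hC i j).eq, toLpLin_mul_same, LinearMap.comp_apply]
  set V : (ι → ℝ) → Submodule ℝ (EuclideanSpace ℝ n) := fun χ => ⨅ i, (T i).eigenspace (χ i)
  have hV : DirectSum.IsInternal V :=
    LinearMap.IsSymmetric.directSum_isInternal_of_pairwise_commute hT hTC
  -- the subordinate basis needs a finite index: keep the finitely many nonzero joint eigenspaces
  let := hV.submodule_iSupIndep.fintypeNeBotOfFiniteDimensional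
  have hV' := DirectSum.isInternal_ne_bot_iff.mpr hV
  have hOF := (LinearMap.IsSymmetric.orthogonalFamily_iInf_eigenspaces hT).comp
    (Subtype.val_injective (p := fun χ => V χ ≠ ⊥))
  have hn : Module.finrank ℝ (EuclideanSpace ℝ n) = Fintype.card n := finrank_euclideanSpace
  refine ⟨(hV'.subordinateOrthonormalBasis hn hOF).reindex (Fintype.equivFin n).symm,
    fun k i => (hV'.subordinateOrthonormalBasisIndex hn (Fintype.equivFin n k) hOF).val i,
    fun k i => ?_⟩
  have hk := (Submodule.mem_iInf _).mp
    (hV'.subordinateOrthonormalBasis_subordinate hn (Fintype.equivFin n k) hOF) i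
  rw [Module.End.mem_eigenspace_iff] at hk
  simp only [OrthonormalBasis.reindex_apply, Equiv.symm_symm]
  exact congrArg WithLp.ofLp hk

theorem exists_transpose_mul_mul_eq_diagonal_of_commute {ι : Type*} (A : ι → Matrix n n ℝ)
    (hA : ∀ i, (A i).IsSymm) (hC : ∀ i j, Commute (A i) (A j)) :
    ∃ U : Matrix n n ℝ, U * Uᵀ = 1 ∧
      ∃ lam : ι → n → ℝ, ∀ i, Uᵀ * A i * U = diagonal (lam i) := by
  obtain ⟨b, μ, hμ⟩ := exists_orthonormalBasis_mulVec_eq_smul_of_commute A hA hC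
  -- the columns of `U` are the common eigenvectors `b k`
  let U := (EuclideanSpace.basisFun n ℝ).toBasis.toMatrix b.toBasis
  have hUU : Uᵀ * U = 1 := by
    simpa [U, star_eq_conjTranspose] using (mem_orthogonalGroup_iff' n ℝ).mp
      ((EuclideanSpace.basisFun n ℝ).toMatrix_orthonormalBasis_mem_orthogonal b)
  refine ⟨U, mul_eq_one_comm.mp hUU, fun i k => μ k i, fun i => ?_⟩
  have hAU : A i * U = U * diagonal (fun k => μ k i) := by
    ext p k
    have := congrFun (hμ k i) p
    simp only [mulVec, dotProduct, Pi.smul_apply, smul_eq_mul] at this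
    simpa [U, mul_apply, Module.Basis.toMatrix_apply, diagonal_apply, mul_comm] using this
  rw [Matrix.mul_assoc, hAU, ← Matrix.mul_assoc, hUU, Matrix.one_mul]

variable {R : Type*} [CommRing R] {U : Matrix n n R}

theorem transpose_mul_mul_same_mul (hU : U * Uᵀ = 1) (X Y : Matrix n n R) :
    Uᵀ * (X * Y) * U = Uᵀ * X * U * (Uᵀ * Y * U) := by
  simp only [Matrix.mul_assoc, ← Matrix.mul_assoc U Uᵀ, hU, Matrix.one_mul]

theorem transpose_mul_mul_same_mul_transpose (hU : U * Uᵀ = 1) (X : Matrix n n R) :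
    Uᵀ * (X * Xᵀ) * U = Uᵀ * X * U * (Uᵀ * X * U)ᵀ := by
  rw [transpose_mul_mul_same_mul hU]
  simp [transpose_mul, Matrix.mul_assoc]

theorem trace_transpose_mul_mul_same (hU : U * Uᵀ = 1) (X : Matrix n n R) :
    (Uᵀ * X * U).trace = X.trace := by
  rw [trace_mul_cycle, hU, Matrix.one_mul]

theorem trace_transpose_mul_transpose_mul_mul_same (hU : U * Uᵀ = 1) (X Y : Matrix n n R) :
    ((Uᵀ * X * U)ᵀ * (Uᵀ * Y * U)).trace = (Xᵀ * Y).trace := by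
  rw [show (Uᵀ * X * U)ᵀ = Uᵀ * Xᵀ * U by simp [transpose_mul, Matrix.mul_assoc],
    ← transpose_mul_mul_same_mul hU, trace_transpose_mul_mul_same hU]

theorem trace_transpose_mul_eq_sum_mul_diag (hU : U * Uᵀ = 1) {A : Matrix n n R} {l : n → R}
    (hA : Uᵀ * A * U = diagonal l) (X : Matrix n n R) :
    (Aᵀ * X).trace = ∑ k, l k * (Uᵀ * X * U) k k := by
  rw [← trace_transpose_mul_transpose_mul_mul_same hU, hA, diagonal_transpose]
  simp [trace, diagonal_mul]

end Matrix

theorem exists_hasDerivAt_of_continuousAt {r : ℝ → ℝ} {a : ℝ}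
    (hr : ∀ u, a ≤ u → ContinuousAt r u) : ∃ R : ℝ → ℝ, ∀ u, a ≤ u → HasDerivAt R (r u) u := by
  have hcont : Continuous fun u => r (max u a) := continuous_iff_continuousAt.2 fun u =>
    (hr _ (le_max_right u a)).comp (f := fun u => max u a)
      (continuous_id.max continuous_const).continuousAt
  refine ⟨fun u => ∫ x in a..u, r (max x a), fun u hu => ?_⟩
  simpa [max_eq_left hu] using (hcont.integral_hasStrictDerivAt a u).hasDerivAt

theorem eq_mul_exp_sub_of_hasDerivAt {f g G : ℝ → ℝ} {a t : ℝ}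
    (hf : ∀ u, a ≤ u → HasDerivAt f (-(g u * f u)) u)
    (hG : ∀ u, a ≤ u → HasDerivAt G (g u) u) (ht : a ≤ t) :
    f t = f a * Real.exp (G a - G t) := by
  have hderiv : ∀ u, a ≤ u → HasDerivAt (fun s => f s * Real.exp (G s)) 0 u := fun u hu =>
    ((hf u hu).fun_mul (hG u hu).exp).congr_deriv (by ring)
  have hconst := constant_of_has_deriv_right_zero
    (fun u hu => (hderiv u hu.1).continuousAt.continuousWithinAt)
    (fun u hu => (hderiv u hu.1).hasDerivWithinAt) t ⟨ht, le_rfl⟩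
  rw [Real.exp_sub, mul_div_assoc', ← hconst]
  field_simp

section GradientFlow

variable {d m : ℕ}

theorem gradLoss_transpose_mul_mul_same {U : Matrix (Fin d) (Fin d) ℝ} (hU : U * Uᵀ = 1)
    (A : Fin m → Matrix (Fin d) (Fin d) ℝ) (y : Fin m → ℝ) (W : Matrix (Fin d) (Fin d) ℝ) :
    gradLoss (fun i => Uᵀ * A i * U) y (Uᵀ * W * U) = Uᵀ * gradLoss A y W * U := by
  simp only [gradLoss, trace_transpose_mul_transpose_mul_mul_same hU, Matrix.mul_sum,
    Matrix.sum_mul, Matrix.mul_smul, Matrix.smul_mul]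

theorem gradLoss_diagonal (lam : Fin m → Fin d → ℝ) (y : Fin m → ℝ)
    (W : Matrix (Fin d) (Fin d) ℝ) :
    gradLoss (fun i => diagonal (lam i)) y W =
      diagonal fun k => ∑ i, (((diagonal (lam i))ᵀ * W).trace - y i) * lam i k := by
  ext p q
  by_cases hpq : p = q <;> simp [gradLoss, Matrix.sum_apply, hpq]

def IsFactoredGradientFlow (A : Fin m → Matrix (Fin d) (Fin d) ℝ) (y : Fin m → ℝ)
    (Z : ℝ → Matrix (Fin d) (Fin d) ℝ) : Prop :=
  ∀ t : ℝ, 0 ≤ t → ∀ p q : Fin d, HasDerivAt (fun s => Z s p q)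
    ((-((2 : ℝ) • (gradLoss A y (Z t * (Z t)ᵀ) * Z t))) p q) t

theorem IsFactoredGradientFlow.transpose_mul_mul_same {A : Fin m → Matrix (Fin d) (Fin d) ℝ}
    {y : Fin m → ℝ} {Z : ℝ → Matrix (Fin d) (Fin d) ℝ} (h : IsFactoredGradientFlow A y Z)
    {U : Matrix (Fin d) (Fin d) ℝ} (hU : U * Uᵀ = 1) :
    IsFactoredGradientFlow (fun i => Uᵀ * A i * U) y (fun s => Uᵀ * Z s * U) := by
  intro t ht p q
  convert hasDerivAt_mul_mul_apply (h t ht) Uᵀ U p q using 1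
  simp only [← transpose_mul_mul_same_mul_transpose hU, gradLoss_transpose_mul_mul_same hU,
    ← transpose_mul_mul_same_mul hU, Matrix.mul_neg, Matrix.neg_mul, Matrix.mul_smul,
    Matrix.smul_mul]

theorem IsFactoredGradientFlow.exists_mul_transpose_eq_diagonal {lam : Fin m → Fin d → ℝ}
    {y : Fin m → ℝ} {Z : ℝ → Matrix (Fin d) (Fin d) ℝ} {α t : ℝ}
    (h : IsFactoredGradientFlow (fun i => diagonal (lam i)) y Z) (h0 : Z 0 = α • 1)
    (ht : 0 ≤ t) :
    ∃ c : Fin m → ℝ, Z t * (Z t)ᵀ = diagonal fun k => α ^ 2 * Real.exp (∑ i, c i * lam i k) := by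
  set r : Fin m → ℝ → ℝ := fun i s => ((diagonal (lam i))ᵀ * (Z s * (Z s)ᵀ)).trace - y i
  have hZ : ∀ s, 0 ≤ s → ContinuousAt Z s := fun s hs =>
    continuousAt_pi.2 fun p => continuousAt_pi.2 fun q => (h s hs p q).continuousAt
  have hr : ∀ i s, 0 ≤ s → ContinuousAt (r i) s := fun i s hs => by
    have : Continuous fun X : Matrix (Fin d) (Fin d) ℝ => ((diagonal (lam i))ᵀ * (X * Xᵀ)).trace :=
      by fun_prop
    exact (this.sub continuous_const).continuousAt.comp (hZ s hs)
  choose R hR using fun i => exists_hasDerivAt_of_continuousAt (hr i)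
  set S : Fin d → ℝ → ℝ := fun p s => 2 * ∑ i, R i s * lam i p
  have hS : ∀ p s, 0 ≤ s → HasDerivAt (S p) (2 * ∑ i, r i s * lam i p) s := fun p s hs =>
    (HasDerivAt.fun_sum fun i _ => (hR i s hs).mul_const _).const_mul 2
  have hentry : ∀ p q s, 0 ≤ s →
      HasDerivAt (fun s => Z s p q) (-((2 * ∑ i, r i s * lam i p) * Z s p q)) s := by
    intro p q s hs
    convert h s hs p q using 1
    simp only [r, gradLoss_diagonal, diagonal_mul, Matrix.neg_apply, Matrix.smul_apply,
      smul_eq_mul, neg_inj]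
    ring
  have hZt : Z t = diagonal fun p => α * Real.exp (S p 0 - S p t) := by
    ext p q
    rw [eq_mul_exp_sub_of_hasDerivAt (hentry p q) (hS p) ht, h0]
    by_cases hpq : p = q <;> simp [hpq, one_apply]
  refine ⟨fun i => 4 * (R i 0 - R i t), ?_⟩
  rw [hZt, diagonal_transpose, diagonal_mul_diagonal]
  congr 1
  ext k
  have hexp : ∑ i, 4 * (R i 0 - R i t) * lam i k = 2 * (S k 0 - S k t) := by
    simp only [S, ← mul_sub, ← Finset.sum_sub_distrib, Finset.mul_sum]
    exact Finset.sum_congr rfl fun i _ => by ring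
  rw [hexp, two_mul, Real.exp_add]
  ring

theorem IsFactoredGradientFlow.exists_diag_transpose_mul_mul_eq_exp
    {A : Fin m → Matrix (Fin d) (Fin d) ℝ} {U : Matrix (Fin d) (Fin d) ℝ} (hU : U * Uᵀ = 1)
    {lam : Fin m → Fin d → ℝ} (hAU : ∀ i, Uᵀ * A i * U = diagonal (lam i)) {y : Fin m → ℝ}
    {Z : ℝ → Matrix (Fin d) (Fin d) ℝ} {α t : ℝ} (h : IsFactoredGradientFlow A y Z)
    (h0 : Z 0 = α • 1) (ht : 0 ≤ t) :
    ∃ c : Fin m → ℝ, (fun k => (Uᵀ * (Z t * (Z t)ᵀ) * U) k k) =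
      fun k => α ^ 2 * Real.exp (∑ i, c i * lam i k) := by
  have hflow := h.transpose_mul_mul_same hU
  simp only [hAU] at hflow
  have hU0 : Uᵀ * Z 0 * U = α • 1 := by
    simp [h0, mul_eq_one_comm.mp hU]
  obtain ⟨c, hc⟩ := hflow.exists_mul_transpose_eq_diagonal hU0 ht
  refine ⟨c, funext fun k => ?_⟩
  simp only [transpose_mul_mul_same_mul_transpose hU, hc, diagonal_apply_eq]

end GradientFlow

theorem exists_eventually_log_mul_sub_le (b : ℝ) {q : ℝ} (hq : 0 ≤ q) :
    ∃ C, ∀ᶠ x in 𝓝 b, Real.log x * (q - b) ≤ C := by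
  rcases eq_or_ne b 0 with rfl | hb
  · refine ⟨0, ?_⟩
    filter_upwards [Ioo_mem_nhds (neg_lt_zero.2 one_pos) one_pos] with x hx
    have hlog : Real.log x ≤ 0 := by
      rw [← Real.log_abs]
      exact Real.log_nonpos (abs_nonneg x) (abs_le.2 ⟨hx.1.le, hx.2.le⟩)
    simpa using mul_nonpos_of_nonpos_of_nonneg hlog hq
  · exact ⟨_, (((Real.continuousAt_log hb).mul_const (q - b)).tendsto.eventually_lt_const
      (lt_add_one _)).mono fun x hx => hx.le⟩

theorem exists_eventually_sum_log_mul_sub_le {n : Type*} [Fintype n] (b : n → ℝ) {q : n → ℝ}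
    (hq : 0 ≤ q) : ∃ K, ∀ᶠ v in 𝓝 b, ∑ k, Real.log (v k) * (q k - b k) ≤ K := by
  choose C hC using fun k => exists_eventually_log_mul_sub_le (b k) (hq k)
  refine ⟨∑ k, C k, ?_⟩
  filter_upwards [eventually_all.2 fun k => ((continuous_apply k).tendsto b).eventually (hC k)]
    with v hv
  exact Finset.sum_le_sum fun k _ => hv k

section ExpFamily

variable {ι n : Type*} [Fintype ι] [Fintype n] {lam : ι → n → ℝ} {b q : n → ℝ}

theorem sum_log_exp_mul_sub_eq (hbq : ∀ i, ∑ k, lam i k * b k = ∑ k, lam i k * q k) {α : ℝ}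
    (hα : 0 < α) (c : ι → ℝ) :
    ∑ k, Real.log (α ^ 2 * Real.exp (∑ i, c i * lam i k)) * (q k - b k) =
      -2 * Real.log α * (∑ k, b k - ∑ k, q k) := by
  have hlog : ∀ k, Real.log (α ^ 2 * Real.exp (∑ i, c i * lam i k)) =
      2 * Real.log α + ∑ i, c i * lam i k := fun k => by
    rw [Real.log_mul (by positivity) (Real.exp_pos _).ne', Real.log_exp, Real.log_pow]
    push_cast
    ring
  have hmoment : ∑ k, (∑ i, c i * lam i k) * (q k - b k) = 0 := by
    simp only [Finset.sum_mul, mul_assoc]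
    rw [Finset.sum_comm]
    simp [← Finset.mul_sum, mul_sub, Finset.sum_sub_distrib, hbq]
  simp only [hlog, add_mul, Finset.sum_add_distrib, hmoment, ← Finset.mul_sum,
    Finset.sum_sub_distrib]
  ring

theorem sum_le_sum_of_tendsto_exp (hq : 0 ≤ q)
    (hbq : ∀ i, ∑ k, lam i k * b k = ∑ k, lam i k * q k) {F : ℝ → ℝ → n → ℝ} {w : ℝ → n → ℝ}
    (hF : ∀ α, 0 < α → ∀ t, 0 ≤ t →
      ∃ c : ι → ℝ, F α t = fun k => α ^ 2 * Real.exp (∑ i, c i * lam i k))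
    (hFw : ∀ α, 0 < α → Tendsto (F α) atTop (𝓝 (w α)))
    (hw : Tendsto w (𝓝[>] 0) (𝓝 b)) :
    ∑ k, b k ≤ ∑ k, q k := by
  refine le_of_forall_pos_le_add fun ε hε => ?_
  obtain ⟨K, hK⟩ := exists_eventually_sum_log_mul_sub_le b hq
  have hL : Tendsto (fun α => -2 * Real.log α) (𝓝[>] 0) atTop :=
    Real.tendsto_log_nhdsGT_zero.const_mul_atBot_of_neg (by norm_num)
  have hnear : ∀ᶠ α in 𝓝[>] (0 : ℝ),
      ∀ᶠ t in atTop, ∑ k, Real.log (F α t k) * (q k - b k) ≤ K :=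
    ((hw.eventually (eventually_eventually_nhds.2 hK)).and eventually_mem_nhdsWithin).mono
      fun α ⟨hα, hα0⟩ => (hFw α hα0).eventually hα
  obtain ⟨α, hα0, hL0, hLK, hαt⟩ := (eventually_mem_nhdsWithin.and
    ((hL.eventually_gt_atTop 0).and ((hL.eventually_ge_atTop (K / ε)).and hnear))).exists
  obtain ⟨t, ht0, htK⟩ := ((eventually_ge_atTop 0).and hαt).exists
  obtain ⟨c, hc⟩ := hF α hα0 t ht0
  rw [hc, sum_log_exp_mul_sub_eq hbq hα0] at htK
  rw [div_le_iff₀ hε] at hLK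
  have : -2 * Real.log α * (∑ k, b k - ∑ k, q k) ≤ -2 * Real.log α * ε := by linarith
  linarith [le_of_mul_le_mul_left this hL0]

end ExpFamily

theorem stmt0_general {d m : ℕ}
    (A : Fin m → Matrix (Fin d) (Fin d) ℝ) (y : Fin m → ℝ)
    (hA_symm : ∀ i, (A i).IsSymm)
    (hA_comm : ∀ i j, Commute (A i) (A j))
    (Z : ℝ → ℝ → Matrix (Fin d) (Fin d) ℝ)
    (hZ_init : ∀ α : ℝ, 0 < α → Z α 0 = α • (1 : Matrix (Fin d) (Fin d) ℝ))
    (hZ_flow : ∀ α : ℝ, 0 < α → ∀ t : ℝ, 0 ≤ t → ∀ p q : Fin d,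
      HasDerivAt (fun s => Z α s p q)
        ((-((2 : ℝ) • (gradLoss A y (Z α t * (Z α t)ᵀ) * Z α t))) p q) t)
    (Winf : ℝ → Matrix (Fin d) (Fin d) ℝ)
    (hWinf : ∀ α : ℝ, 0 < α →
      Tendsto (fun t => Z α t * (Z α t)ᵀ) atTop (nhds (Winf α)))
    (Wbar : Matrix (Fin d) (Fin d) ℝ)
    (hWbar : Tendsto Winf (nhdsWithin 0 (Set.Ioi 0)) (nhds Wbar))
    (hWbar_feas : ∀ i, ((A i)ᵀ * Wbar).trace = y i) :
    ∀ W : Matrix (Fin d) (Fin d) ℝ, W.PosSemidef →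
      (∀ i, ((A i)ᵀ * W).trace = y i) → Wbar.trace ≤ W.trace := by
  intro W hW hW_feas
  obtain ⟨U, hU, lam, hAU⟩ := exists_transpose_mul_mul_eq_diagonal_of_commute A hA_symm hA_comm
  set rotDiag : Matrix (Fin d) (Fin d) ℝ → Fin d → ℝ := fun X k => (Uᵀ * X * U) k k
  have hrotDiag : Continuous rotDiag := by fun_prop
  have htrace : ∀ X, X.trace = ∑ k, rotDiag X k := fun X =>
    (trace_transpose_mul_mul_same hU X).symm
  have hW_nonneg : 0 ≤ rotDiag W := fun k => by
    simpa [conjTranspose_eq_transpose_of_trivial] using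
      (hW.conjTranspose_mul_mul_same U).diag_nonneg
  rw [htrace, htrace]
  refine sum_le_sum_of_tendsto_exp hW_nonneg (fun i => ?_)
    (fun α hα t ht => IsFactoredGradientFlow.exists_diag_transpose_mul_mul_eq_exp hU hAU
      (hZ_flow α hα) (hZ_init α hα) ht)
    (fun α hα => (hrotDiag.tendsto _).comp (hWinf α hα)) ((hrotDiag.tendsto _).comp hWbar)
  rw [← trace_transpose_mul_eq_sum_mul_diag hU (hAU i),
    ← trace_transpose_mul_eq_sum_mul_diag hU (hAU i), hWbar_feas, hW_feas]

/-- Gradient flow on `Z ↦ ℓ(Z Zᵀ)` initialized at `α·I` (for commuting, symmetric,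
linearly independent measurement matrices) converges, as `α → 0⁺`, to a feasible PSD
matrix of minimal nuclear norm (= trace, for PSD matrices). -/
theorem stmt0 {d m : ℕ}
    (A : Fin m → Matrix (Fin d) (Fin d) ℝ) (y : Fin m → ℝ)
    (hA_symm : ∀ i, (A i).IsSymm)
    (hA_comm : ∀ i j, Commute (A i) (A j))
    (hA_li : LinearIndependent ℝ A)
    (Z : ℝ → ℝ → Matrix (Fin d) (Fin d) ℝ)
    (hZ_init : ∀ α : ℝ, 0 < α → Z α 0 = α • (1 : Matrix (Fin d) (Fin d) ℝ))
    (hZ_flow : ∀ α : ℝ, 0 < α → ∀ t : ℝ, 0 ≤ t → ∀ p q : Fin d,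
      HasDerivAt (fun s => Z α s p q)
        ((-((2 : ℝ) • (gradLoss A y (Z α t * (Z α t)ᵀ) * Z α t))) p q) t)
    (Winf : ℝ → Matrix (Fin d) (Fin d) ℝ)
    (hWinf : ∀ α : ℝ, 0 < α →
      Tendsto (fun t => Z α t * (Z α t)ᵀ) atTop (nhds (Winf α)))
    (Wbar : Matrix (Fin d) (Fin d) ℝ)
    (hWbar : Tendsto Winf (nhdsWithin 0 (Set.Ioi 0)) (nhds Wbar))
    (hWbar_psd : Wbar.PosSemidef)
    (hWbar_feas : ∀ i, ((A i)ᵀ * Wbar).trace = y i) :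
    ∀ W : Matrix (Fin d) (Fin d) ℝ, W.PosSemidef →
      (∀ i, ((A i)ᵀ * W).trace = y i) → Wbar.trace ≤ W.trace :=
  stmt0_general A y hA_symm hA_comm Z hZ_init hZ_flow Winf hWinf Wbar hWbar hWbar_feas
end

section
/- Let A₁, …, A_m ∈ ℝ^{d×d} be symmetric, pairwise commuting, linearly independent matrices and y₁, …, y_m ∈ ℝ. For each α > 0 let W_{α,1}, W_{α,2} : [0,∞) → ℝ^{d×d} be differentiable with W_{α,1}(0) = W_{α,2}(0) = α·I and, for all t ≥ 0, W_{α,1}′(t) = −W_{α,2}(t)ᵀ·∇ℓ(W_{α,2}(t)·W_{α,1}(t)) and W_{α,2}′(t) = −∇ℓ(W_{α,2}(t)·W_{α,1}(t))·W_{α,1}(t)ᵀ, where ∇ℓ(W) = Σ_{i=1}^m (⟨A_i, W⟩ − y_i)·A_i (gradient flow on the asymmetric depth-2 factorization (W₁, W₂) ↦ ℓ(W₂W₁) initialized at α·I). Assume that for every α > 0 the limit W_∞(α) := lim_{t→∞} W_{α,2}(t)·W_{α,1}(t) exists, that the limit W̄ := lim_{α→0⁺} W_∞(α) exists, that W̄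 is positive semidefinite, and that ⟨A_i, W̄⟩ = y_i for all i. Then for every positive semidefinite W ∈ ℝ^{d×d} with ⟨A_i, W⟩ = y_i for all i, tr(W̄) ≤ tr(W); i.e., W̄ has minimal nuclear norm among feasible positive semidefinite matrices. -/
open Matrix Filter Topology

/-!
Along a common unit eigenvector `q` of the `Aᵢ` the gradient `∇ℓ` acts as a scalar `g(t)`, so
`u = W₁ q` and `v = W₂ᵀ q` satisfy `u' = -g v`, `v' = -g u` with `u(0) = v(0) = α q`. Hence
`u = v = α e^{-∫g} q` and `qᵀ W₂ W₁ q = α² e^{-2∫g}`. For the eigenbasis `q_j` with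
`Aᵢ q_j = μᵢⱼ q_j` one has `g_j = Σᵢ cᵢ μᵢⱼ` with residuals `cᵢ = ⟨Aᵢ, W₂ W₁⟩ - yᵢ`, while for a
feasible `W` the numbers `δ_j = q_jᵀ (W - W̄) q_j` satisfy `Σ_j μᵢⱼ δ_j = tr(Aᵢ (W - W̄)) = 0`.
The exponents therefore cancel in `Σ_j δ_j log (q_jᵀ W₂ W₁ q_j) = 2 log α · (tr W - tr W̄)`, for
every `α` and `t`. Near `W̄` the left side is bounded above: terms with `q_jᵀ W̄ q_j ≠ 0` converge,
and terms with `q_jᵀ W̄ q_j = 0` have a small logarithm and `δ_j = q_jᵀ W q_j ≥ 0`. Letting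
`t → ∞`, then `α → 0⁺`, `log α → -∞` forces `tr W - tr W̄ ≥ 0`.
-/

open Set Module
open scoped Function

theorem LinearMap.IsSymmetric.exists_orthonormalBasis_apply_eq_smul_of_commute
    {𝕜 E ι : Type*} [RCLike 𝕜] [NormedAddCommGroup E] [InnerProductSpace 𝕜 E]
    [FiniteDimensional 𝕜 E] {n : ℕ} (hn : finrank 𝕜 E = n) {T : ι → E →ₗ[𝕜] E}
    (hT : ∀ i, (T i).IsSymmetric) (hC : Pairwise (Commute on T)) :
    ∃ (b : OrthonormalBasis (Fin n) 𝕜 E) (μ : ι → Fin n → 𝕜), ∀ i j, T i (b j) = μ i j • b j := by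
  classical
  set V : (ι → 𝕜) → Submodule 𝕜 E := fun χ => ⨅ i, Module.End.eigenspace (T i) (χ i)
  have hOF : OrthogonalFamily 𝕜 (fun χ => V χ) fun χ => (V χ).subtypeₗᵢ :=
    orthogonalFamily_iInf_eigenspaces hT
  -- The index type `ι → 𝕜` is infinite, but only finitely many joint eigenspaces are nonzero.
  have : Fintype {χ // V χ ≠ ⊥} :=
    (Submodule.finite_ne_bot_of_iSupIndep hOF.independent).fintype
  have hint := DirectSum.isInternal_ne_bot_iff.mpr (directSum_isInternal_of_pairwise_commute hT hC)
  have hOF' := hOF.comp (Subtype.val_injective (p := fun χ => V χ ≠ ⊥))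
  refine ⟨hint.subordinateOrthonormalBasis hn hOF',
    fun i j => (hint.subordinateOrthonormalBasisIndex hn j hOF').1 i, fun i j => ?_⟩
  exact Module.End.mem_eigenspace_iff.mp
    (Submodule.mem_iInf _ |>.mp (hint.subordinateOrthonormalBasis_subordinate hn j hOF') i)

theorem Matrix.exists_orthonormalBasis_mulVec_eq_smul_of_commute_s2 {n ι : Type*} [Fintype n]
    [DecidableEq n] {A : ι → Matrix n n ℝ} (hA : ∀ i, (A i).IsSymm)
    (hC : Pairwise fun i j => Commute (A i) (A j)) :
    ∃ (b : OrthonormalBasis (Fin (Fintype.card n)) ℝ (EuclideanSpace ℝ n))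
      (μ : ι → Fin (Fintype.card n) → ℝ), ∀ i j, A i *ᵥ (b j).ofLp = μ i j • (b j).ofLp := by
  have hT : ∀ i, (toEuclideanLin (A i)).IsSymmetric := fun i =>
    isSymmetric_toEuclideanLin_iff.mpr (hA i)
  have hTC : Pairwise (Commute on fun i => toEuclideanLin (A i)) := fun i j hij => by
    ext x : 1
    simp only [Module.End.mul_apply, toLpLin_apply, mulVec_mulVec, (hC hij).eq]
  obtain ⟨b, μ, hb⟩ := LinearMap.IsSymmetric.exists_orthonormalBasis_apply_eq_smul_of_commute
    finrank_euclideanSpace hT hTC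
  exact ⟨b, μ, fun i j => congrArg WithLp.ofLp (hb i j)⟩

theorem Matrix.trace_eq_sum_dotProduct_mulVec {n ι : Type*} [Fintype n] [DecidableEq n]
    [Fintype ι] (b : OrthonormalBasis ι ℝ (EuclideanSpace ℝ n)) (M : Matrix n n ℝ) :
    M.trace = ∑ j, (b j).ofLp ⬝ᵥ (M *ᵥ (b j).ofLp) := by
  rw [← M.trace_toLin_eq (PiLp.basisFun 2 ℝ n), ← Matrix.toLpLin_eq_toLin,
    LinearMap.trace_eq_sum_inner _ b]
  simp [EuclideanSpace.inner_eq_star_dotProduct, dotProduct_comm]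

theorem Matrix.trace_transpose_mul_eq_sum {n ι : Type*} [Fintype n] [DecidableEq n] [Fintype ι]
    (b : OrthonormalBasis ι ℝ (EuclideanSpace ℝ n)) {A : Matrix n n ℝ} {μ : ι → ℝ}
    (h : ∀ j, A *ᵥ (b j).ofLp = μ j • (b j).ofLp) (M : Matrix n n ℝ) :
    (Aᵀ * M).trace = ∑ j, μ j * ((b j).ofLp ⬝ᵥ (M *ᵥ (b j).ofLp)) := by
  rw [trace_eq_sum_dotProduct_mulVec b]
  refine Finset.sum_congr rfl fun j _ => ?_
  rw [← mulVec_mulVec, dotProduct_mulVec, vecMul_transpose, h, smul_dotProduct, smul_eq_mul]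

theorem Matrix.continuousAt_of_hasDerivAt_apply {m n : Type*} {W : ℝ → Matrix m n ℝ}
    {W' : Matrix m n ℝ} {t : ℝ} (h : ∀ p r, HasDerivAt (fun s => W s p r) (W' p r) t) :
    ContinuousAt W t :=
  continuousAt_pi.2 fun p => continuousAt_pi.2 fun r => (h p r).continuousAt

theorem Matrix.hasDerivAt_mulVec {m n : Type*} [Fintype n] {W : ℝ → Matrix m n ℝ}
    {W' : Matrix m n ℝ} {t : ℝ} (h : ∀ p r, HasDerivAt (fun s => W s p r) (W' p r) t)
    (x : n → ℝ) : HasDerivAt (fun s => W s *ᵥ x) (W' *ᵥ x) t :=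
  hasDerivAt_pi.2 fun p => HasDerivAt.fun_sum fun r _ => (h p r).mul_const (x r)

theorem eq_exp_integral_smul_of_hasDerivAt {E : Type*} [NormedAddCommGroup E] [NormedSpace ℝ E]
    {f : ℝ → E} {g : ℝ → ℝ} (hg : ContinuousOn g (Ici 0))
    (hf : ∀ t, 0 ≤ t → HasDerivAt f (g t • f t) t) {t : ℝ} (ht : 0 ≤ t) :
    f t = Real.exp (∫ s in (0 : ℝ)..t, g s) • f 0 := by
  set σ : ℝ → ℝ := fun u => ∫ s in (0 : ℝ)..u, g s
  have hσ : ∀ u, 0 ≤ u → HasDerivWithinAt σ (g u) (Ici u) u := fun u hu =>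
    intervalIntegral.integral_hasDerivWithinAt_right
      ((hg.mono (by simp [uIcc_of_le hu, Icc_subset_Ici_self])).intervalIntegrable)
      ((hg.mono (Ioi_subset_Ici hu)).stronglyMeasurableAtFilter_nhdsWithin measurableSet_Ioi u)
      ((hg u hu).mono (Ioi_subset_Ici hu))
  have hσc : ContinuousOn σ (Icc 0 t) := by
    rw [← uIcc_of_le ht]
    exact intervalIntegral.continuousOn_primitive_interval
      ((hg.mono (by simp [uIcc_of_le ht, Icc_subset_Ici_self])).integrableOn_compact isCompact_uIcc)
  set F : ℝ → E := fun u => Real.exp (-σ u) • f u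
  have hF : ∀ u ∈ Ico 0 t, HasDerivWithinAt F 0 (Ici u) u := fun u hu => by
    have := ((hσ u hu.1).neg.exp).smul (hf u hu.1).hasDerivWithinAt
    rwa [smul_smul, ← add_smul, mul_neg, add_neg_cancel, zero_smul] at this
  have hFc : ContinuousOn F (Icc 0 t) :=
    hσc.neg.rexp.smul fun u hu => (hf u hu.1).continuousAt.continuousWithinAt
  have hFt : F t = F 0 := constant_of_has_deriv_right_zero hFc hF t ⟨ht, le_rfl⟩
  simp only [F, σ, intervalIntegral.integral_same, neg_zero, Real.exp_zero, one_smul] at hFt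
  rw [← hFt, smul_smul, ← Real.exp_add, add_neg_cancel, Real.exp_zero, one_smul]

theorem dotProduct_mul_mulVec_eq_exp_integral_of_hasDerivAt {n : Type*} [Fintype n]
    [DecidableEq n]
    {W₁ W₂ G : ℝ → Matrix n n ℝ} {g : ℝ → ℝ} {α : ℝ} {q : n → ℝ}
    (hG : ∀ t, (G t).IsSymm) (hGq : ∀ t, 0 ≤ t → G t *ᵥ q = g t • q)
    (hg : ContinuousOn g (Ici 0)) (h₁0 : W₁ 0 = α • 1) (h₂0 : W₂ 0 = α • 1)
    (h₁ : ∀ t, 0 ≤ t → ∀ p r, HasDerivAt (fun s => W₁ s p r) ((-((W₂ t)ᵀ * G t)) p r) t)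
    (h₂ : ∀ t, 0 ≤ t → ∀ p r, HasDerivAt (fun s => W₂ s p r) ((-(G t * (W₁ t)ᵀ)) p r) t)
    {t : ℝ} (ht : 0 ≤ t) :
    q ⬝ᵥ ((W₂ t * W₁ t) *ᵥ q) = α ^ 2 * (q ⬝ᵥ q) * Real.exp (-2 * ∫ s in (0 : ℝ)..t, g s) := by
  set u : ℝ → n → ℝ := fun s => W₁ s *ᵥ q
  set v : ℝ → n → ℝ := fun s => (W₂ s)ᵀ *ᵥ q
  have hu : ∀ s, 0 ≤ s → HasDerivAt u (-g s • v s) s := fun s hs => by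
    convert hasDerivAt_mulVec (h₁ s hs) q using 1
    rw [neg_mulVec, ← mulVec_mulVec, hGq s hs, mulVec_smul, neg_smul]
  have hv : ∀ s, 0 ≤ s → HasDerivAt v (-g s • u s) s := fun s hs => by
    convert hasDerivAt_mulVec (W := fun s => (W₂ s)ᵀ) (W' := (-(G s * (W₁ s)ᵀ))ᵀ)
      (fun p r => h₂ s hs r p) q using 1
    rw [transpose_neg, transpose_mul, transpose_transpose, (hG s).eq, neg_mulVec,
      ← mulVec_mulVec, hGq s hs, mulVec_smul, neg_smul]
  have hu0 : u 0 = α • q := by simp [u, h₁0, smul_mulVec]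
  have hv0 : v 0 = α • q := by simp [v, h₂0, smul_mulVec]
  -- `u - v` solves `f' = g f` from `0`, and `u + v` solves `f' = -g f` from `2 α q`.
  have huv : u t = v t := by
    have := eq_exp_integral_smul_of_hasDerivAt (f := u - v) hg (fun s hs => by
      convert (hu s hs).sub (hv s hs) using 1
      simp only [Pi.sub_apply, smul_sub, neg_smul]; abel) ht
    rwa [Pi.sub_apply, Pi.sub_apply, hu0, hv0, sub_self, smul_zero, sub_eq_zero] at this
  have hu_eq : u t = Real.exp (-∫ s in (0 : ℝ)..t, g s) • α • q := by
    have := eq_exp_integral_smul_of_hasDerivAt (f := u + v) (g := fun s => -g s) hg.neg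
      (fun s hs => by
        convert (hu s hs).add (hv s hs) using 1
        simp only [Pi.add_apply, smul_add, neg_smul]; abel) ht
    rw [Pi.add_apply, Pi.add_apply, ← huv, hu0, hv0, intervalIntegral.integral_neg,
      ← two_smul ℝ (u t), ← two_smul ℝ (α • q), smul_comm _ (2 : ℝ)] at this
    exact smul_right_injective _ two_ne_zero this
  have hq : q ⬝ᵥ ((W₂ t * W₁ t) *ᵥ q) = u t ⬝ᵥ u t := by
    rw [← mulVec_mulVec, dotProduct_mulVec, ← mulVec_transpose]
    exact congrArg (· ⬝ᵥ u t) huv.symm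
  rw [hq, hu_eq, smul_dotProduct, dotProduct_smul, smul_dotProduct, dotProduct_smul, smul_eq_mul,
    smul_eq_mul, smul_eq_mul, smul_eq_mul, show -2 * ∫ s in (0 : ℝ)..t, g s =
      (-∫ s in (0 : ℝ)..t, g s) + -∫ s in (0 : ℝ)..t, g s by ring, Real.exp_add]
  ring

theorem gradLoss_isSymm {d m : ℕ} {A : Fin m → Matrix (Fin d) (Fin d) ℝ}
    (hA : ∀ i, (A i).IsSymm) (y : Fin m → ℝ) (W : Matrix (Fin d) (Fin d) ℝ) :
    (gradLoss A y W).IsSymm := by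
  simp [gradLoss, IsSymm, transpose_sum, (hA _).eq]

theorem gradLoss_mulVec_of_mulVec_eq_smul {d m : ℕ} {A : Fin m → Matrix (Fin d) (Fin d) ℝ}
    {q : Fin d → ℝ} {μ : Fin m → ℝ} (h : ∀ i, A i *ᵥ q = μ i • q) (y : Fin m → ℝ)
    (W : Matrix (Fin d) (Fin d) ℝ) :
    gradLoss A y W *ᵥ q = (∑ i, (((A i)ᵀ * W).trace - y i) * μ i) • q := by
  simp [gradLoss, sum_mulVec, smul_mulVec, h, smul_smul, Finset.sum_smul]

theorem sum_log_dotProduct_mul_mulVec_mul_eq {d m : ℕ} {κ : Type*} [Fintype κ]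
    {A : Fin m → Matrix (Fin d) (Fin d) ℝ} {y : Fin m → ℝ} (hA : ∀ i, (A i).IsSymm)
    {q : κ → Fin d → ℝ} {μ : Fin m → κ → ℝ} (hq : ∀ j, q j ⬝ᵥ q j = 1)
    (heig : ∀ i j, A i *ᵥ q j = μ i j • q j) {δ : κ → ℝ} (hδ : ∀ i, ∑ j, μ i j * δ j = 0)
    {W₁ W₂ : ℝ → Matrix (Fin d) (Fin d) ℝ} {α : ℝ} (hα : 0 < α)
    (h₁0 : W₁ 0 = α • 1) (h₂0 : W₂ 0 = α • 1)
    (h₁ : ∀ t, 0 ≤ t → ∀ p r, HasDerivAt (fun s => W₁ s p r)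
      ((-((W₂ t)ᵀ * gradLoss A y (W₂ t * W₁ t))) p r) t)
    (h₂ : ∀ t, 0 ≤ t → ∀ p r, HasDerivAt (fun s => W₂ s p r)
      ((-(gradLoss A y (W₂ t * W₁ t) * (W₁ t)ᵀ)) p r) t)
    {t : ℝ} (ht : 0 ≤ t) :
    (∀ j, 0 < q j ⬝ᵥ ((W₂ t * W₁ t) *ᵥ q j)) ∧
      ∑ j, Real.log (q j ⬝ᵥ ((W₂ t * W₁ t) *ᵥ q j)) * δ j = Real.log α * (2 * ∑ j, δ j) := by
  set g : κ → ℝ → ℝ := fun j s => ∑ i, (((A i)ᵀ * (W₂ s * W₁ s)).trace - y i) * μ i j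
  have hg : ∀ j, ContinuousOn (g j) (Ici 0) := fun j s hs => by
    have h₁c := continuousAt_of_hasDerivAt_apply (h₁ s hs)
    have h₂c := continuousAt_of_hasDerivAt_apply (h₂ s hs)
    exact ContinuousAt.continuousWithinAt (by fun_prop)
  have hx : ∀ j, q j ⬝ᵥ ((W₂ t * W₁ t) *ᵥ q j) =
      α ^ 2 * Real.exp (-2 * ∫ s in (0 : ℝ)..t, g j s) := fun j => by
    simpa [hq j] using dotProduct_mul_mulVec_eq_exp_integral_of_hasDerivAt
      (fun s => gradLoss_isSymm hA y _)
      (fun s _ => gradLoss_mulVec_of_mulVec_eq_smul (heig · j) y _) (hg j) h₁0 h₂0 h₁ h₂ ht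
  have hcons : ∑ j, (∫ s in (0 : ℝ)..t, g j s) * δ j = 0 := by
    have hpt : ∀ s, ∑ j, g j s * δ j = 0 := fun s => by
      simp only [g, Finset.sum_mul, mul_assoc]
      rw [Finset.sum_comm]
      simp [← Finset.mul_sum, hδ]
    simp_rw [← intervalIntegral.integral_mul_const]
    rw [← intervalIntegral.integral_finsetSum fun j _ => ((hg j).mono
      (by simp [uIcc_of_le ht, Icc_subset_Ici_self])).intervalIntegrable.mul_const _]
    simp [hpt]
  refine ⟨fun j => by rw [hx j]; positivity, ?_⟩
  simp_rw [hx, Real.log_mul (by positivity : α ^ 2 ≠ 0) (Real.exp_pos _).ne', Real.log_pow,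
    Real.log_exp]
  simp only [add_mul, Finset.sum_add_distrib, mul_assoc, ← Finset.mul_sum, hcons]
  push_cast
  ring

theorem Real.exists_eventually_log_mul_le {w δ : ℝ} (h : w = 0 → 0 ≤ δ) :
    ∃ C, ∀ᶠ x in 𝓝 w, 0 < x → Real.log x * δ ≤ C := by
  rcases eq_or_ne w 0 with rfl | hw
  · refine ⟨0, ?_⟩
    filter_upwards [Iio_mem_nhds one_pos] with x hx1 hx0
    exact mul_nonpos_of_nonpos_of_nonneg (Real.log_nonpos hx0.le hx1.le) (h rfl)
  · refine ⟨Real.log w * δ + 1, ?_⟩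
    filter_upwards [((Real.continuousAt_log hw).mul_const δ).eventually
      (gt_mem_nhds (lt_add_one _))] with x hx _ using hx.le

theorem exists_eventually_sum_log_mul_le {ι X : Type*} [Fintype ι] [TopologicalSpace X]
    {F : ι → X → ℝ} (hF : ∀ j, Continuous (F j)) {x₀ : X} {δ : ι → ℝ}
    (h : ∀ j, F j x₀ = 0 → 0 ≤ δ j) :
    ∃ C, ∀ᶠ x in 𝓝 x₀, (∀ j, 0 < F j x) → ∑ j, Real.log (F j x) * δ j ≤ C := by
  choose C hC using fun j => Real.exists_eventually_log_mul_le (h j)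
  refine ⟨∑ j, C j, ?_⟩
  filter_upwards [eventually_all.2 fun j => ((hF j).tendsto x₀).eventually (hC j)] with x hx hpos
  exact Finset.sum_le_sum fun j _ => hx j (hpos j)

theorem Filter.Tendsto.eventually_eventually_of_tendsto {α β X : Type*} [TopologicalSpace X]
    {la : Filter α} {lb : Filter β} {F : α → β → X} {G : α → X} {x₀ : X}
    (hG : Tendsto G la (𝓝 x₀)) (hF : ∀ᶠ a in la, Tendsto (F a) lb (𝓝 (G a)))
    {P : X → Prop} (hP : ∀ᶠ x in 𝓝 x₀, P x) : ∀ᶠ a in la, ∀ᶠ b in lb, P (F a b) := by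
  filter_upwards [hG.eventually (eventually_eventually_nhds.2 hP), hF] with a ha hFa
  exact hFa.eventually ha

theorem Real.nonneg_of_eventually_log_mul_le {s C : ℝ}
    (h : ∀ᶠ α in 𝓝[>] (0 : ℝ), Real.log α * s ≤ C) : 0 ≤ s := by
  by_contra! hs
  obtain ⟨α, hle, hgt⟩ :=
    (h.and ((Real.tendsto_log_nhdsGT_zero.atBot_mul_const_of_neg hs).eventually_gt_atTop C)).exists
  linarith

theorem stmt2_general {d m : ℕ}
    (A : Fin m → Matrix (Fin d) (Fin d) ℝ) (y : Fin m → ℝ)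
    (hA_symm : ∀ i, (A i).IsSymm)
    (hA_comm : ∀ i j, Commute (A i) (A j))
    (W₁ W₂ : ℝ → ℝ → Matrix (Fin d) (Fin d) ℝ)
    (hW₁_init : ∀ α : ℝ, 0 < α → W₁ α 0 = α • (1 : Matrix (Fin d) (Fin d) ℝ))
    (hW₂_init : ∀ α : ℝ, 0 < α → W₂ α 0 = α • (1 : Matrix (Fin d) (Fin d) ℝ))
    (hW₁_flow : ∀ α : ℝ, 0 < α → ∀ t : ℝ, 0 ≤ t → ∀ p q : Fin d,
      HasDerivAt (fun s => W₁ α s p q)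
        ((-((W₂ α t)ᵀ * gradLoss A y (W₂ α t * W₁ α t))) p q) t)
    (hW₂_flow : ∀ α : ℝ, 0 < α → ∀ t : ℝ, 0 ≤ t → ∀ p q : Fin d,
      HasDerivAt (fun s => W₂ α s p q)
        ((-(gradLoss A y (W₂ α t * W₁ α t) * (W₁ α t)ᵀ)) p q) t)
    (Winf : ℝ → Matrix (Fin d) (Fin d) ℝ)
    (hWinf : ∀ α : ℝ, 0 < α →
      Tendsto (fun t => W₂ α t * W₁ α t) atTop (nhds (Winf α)))
    (Wbar : Matrix (Fin d) (Fin d) ℝ)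
    (hWbar : Tendsto Winf (nhdsWithin 0 (Set.Ioi 0)) (nhds Wbar))
    (hWbar_feas : ∀ i, ((A i)ᵀ * Wbar).trace = y i) :
    ∀ W : Matrix (Fin d) (Fin d) ℝ, W.PosSemidef →
      (∀ i, ((A i)ᵀ * W).trace = y i) → Wbar.trace ≤ W.trace := by
  intro W hW hW_feas
  obtain ⟨b, μ, heig⟩ :=
    exists_orthonormalBasis_mulVec_eq_smul_of_commute_s2 hA_symm fun i j _ => hA_comm i j
  set q := fun j => (b j).ofLp
  set δ := fun j => q j ⬝ᵥ ((W - Wbar) *ᵥ q j)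
  have hq : ∀ j, q j ⬝ᵥ q j = 1 := fun j => by
    have := b.inner_eq_one j
    rwa [EuclideanSpace.inner_eq_star_dotProduct, star_trivial] at this
  have hδ : ∀ i, ∑ j, μ i j * δ j = 0 := fun i => by
    rw [← trace_transpose_mul_eq_sum b (heig i), mul_sub, trace_sub, hW_feas, hWbar_feas,
      sub_self]
  have hker : ∀ j, q j ⬝ᵥ (Wbar *ᵥ q j) = 0 → 0 ≤ δ j := fun j hj => by
    simpa [δ, sub_mulVec, hj] using hW.dotProduct_mulVec_nonneg (q j)
  obtain ⟨C, hC⟩ := exists_eventually_sum_log_mul_le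
    (F := fun j M => q j ⬝ᵥ (M *ᵥ q j)) (fun j => by fun_prop) hker
  have hbound : ∀ᶠ α in 𝓝[>] (0 : ℝ), Real.log α * (2 * ∑ j, δ j) ≤ C := by
    filter_upwards [hWbar.eventually_eventually_of_tendsto
      (eventually_mem_nhdsWithin.mono hWinf) hC, self_mem_nhdsWithin] with α hα hα0
    obtain ⟨t, hCt, ht⟩ := (hα.and (eventually_ge_atTop 0)).exists
    obtain ⟨hpos, hlog⟩ := sum_log_dotProduct_mul_mulVec_mul_eq hA_symm hq heig hδ hα0
      (hW₁_init α hα0) (hW₂_init α hα0) (hW₁_flow α hα0) (hW₂_flow α hα0) ht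
    exact hlog ▸ hCt hpos
  have htrace : W.trace - Wbar.trace = ∑ j, δ j := by
    rw [← trace_sub, trace_eq_sum_dotProduct_mulVec b]
  linarith [Real.nonneg_of_eventually_log_mul_le hbound]

/-- Gradient flow on the asymmetric depth-2 factorization `(W₁, W₂) ↦ ℓ(W₂ W₁)`
initialized at `α·I` (for commuting, symmetric, linearly independent measurement
matrices): the limit of the product matrix, as `t → ∞` and then `α → 0⁺`, if it exists,
is PSD and feasible, is a feasible PSD matrix of minimal nuclear norm. -/
theorem stmt2 {d m : ℕ}
    (A : Fin m → Matrix (Fin d) (Fin d) ℝ) (y : Fin m → ℝ)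
    (hA_symm : ∀ i, (A i).IsSymm)
    (hA_comm : ∀ i j, Commute (A i) (A j))
    (hA_li : LinearIndependent ℝ A)
    (W₁ W₂ : ℝ → ℝ → Matrix (Fin d) (Fin d) ℝ)
    (hW₁_init : ∀ α : ℝ, 0 < α → W₁ α 0 = α • (1 : Matrix (Fin d) (Fin d) ℝ))
    (hW₂_init : ∀ α : ℝ, 0 < α → W₂ α 0 = α • (1 : Matrix (Fin d) (Fin d) ℝ))
    (hW₁_flow : ∀ α : ℝ, 0 < α → ∀ t : ℝ, 0 ≤ t → ∀ p q : Fin d,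
      HasDerivAt (fun s => W₁ α s p q)
        ((-((W₂ α t)ᵀ * gradLoss A y (W₂ α t * W₁ α t))) p q) t)
    (hW₂_flow : ∀ α : ℝ, 0 < α → ∀ t : ℝ, 0 ≤ t → ∀ p q : Fin d,
      HasDerivAt (fun s => W₂ α s p q)
        ((-(gradLoss A y (W₂ α t * W₁ α t) * (W₁ α t)ᵀ)) p q) t)
    (Winf : ℝ → Matrix (Fin d) (Fin d) ℝ)
    (hWinf : ∀ α : ℝ, 0 < α →
      Tendsto (fun t => W₂ α t * W₁ α t) atTop (nhds (Winf α)))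
    (Wbar : Matrix (Fin d) (Fin d) ℝ)
    (hWbar : Tendsto Winf (nhdsWithin 0 (Set.Ioi 0)) (nhds Wbar))
    (hWbar_psd : Wbar.PosSemidef)
    (hWbar_feas : ∀ i, ((A i)ᵀ * Wbar).trace = y i) :
    ∀ W : Matrix (Fin d) (Fin d) ℝ, W.PosSemidef →
      (∀ i, ((A i)ᵀ * W).trace = y i) → Wbar.trace ≤ W.trace :=
  stmt2_general A y hA_symm hA_comm W₁ W₂ hW₁_init hW₂_init hW₁_flow hW₂_flow Winf hWinf Wbar hWbar
    hWbar_feas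
end

section
/- Let d ≥ 3 and 0 < p < 1, and let C_d := {W ∈ ℝ^{d×d} : W is positive semidefinite, W₁₁ = W₂₂, and W₁₁ = W_{kk} + 1 for every k = 3, …, d}. Then W̄ := diag(1, 1, 0, …, 0) is not a local minimum of the Schatten-p quasi-norm on C_d: for every δ > 0 there exists W ∈ C_d with ‖W − W̄‖_F < δ and Σ_{k=1}^d λ_k(W)^p < Σ_{k=1}^d λ_k(W̄)^p = 2. (A witness is the matrix with upper-left 2×2 block [[1, ε],[ε, 1]] and zeros elsewhere, for small ε ∈ (0,1), whose nonzero eigenvalues are 1 + ε and 1 − ε, and (1+ε)^p + (1−ε)^p < 2.) -/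
/-!
The witness is `W = W̄ + ε E`, where `E` swaps the first two coordinates: it satisfies the
constraints and lies at Frobenius distance `√2 ε` from `W̄`. Its nonzero eigenvalues are `1 ± ε`,
so `Σ λ^p = (1 + ε)^p + (1 - ε)^p < 2` by strict concavity of `t ↦ t^p`.

The eigenvalues are identified without diagonalizing `W`: the identity
`W (W - (1 + ε)) (W - (1 - ε)) = 0` puts each of them in `{0, 1 + ε, 1 - ε}`, and on this set
any `f` with `f 0 = 0` agrees with some `α t + β t²`, so `Σ f(λ)` only depends on `tr W` and
`tr W²`. At `ε = 0` the same computation gives `Σ λ(W̄)^p = 2`.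
-/

open Matrix Polynomial

namespace Matrix.IsHermitian

variable {n : Type*} [Fintype n] [DecidableEq n] {A : Matrix n n ℝ}

theorem eval_eigenvalues_eq_zero (hA : A.IsHermitian) {q : ℝ[X]} (hq : aeval A q = 0) (i : n) :
    q.eval (hA.eigenvalues i) = 0 := by
  have : Nonempty n := ⟨i⟩
  have := spectrum.subset_polynomial_aeval A q ⟨_, hA.eigenvalues_mem_spectrum_real i, rfl⟩
  simpa [hq, spectrum.zero_eq] using this

theorem trace_mul_self_eq_sum_sq_eigenvalues (hA : A.IsHermitian) :
    trace (A * A) = ∑ i, hA.eigenvalues i ^ 2 := by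
  conv_lhs => rw [hA.spectral_theorem, ← map_mul, Unitary.conjStarAlgAut_apply, trace_mul_cycle,
    Unitary.coe_star_mul_self, one_mul, diagonal_mul_diagonal, trace_diagonal]
  simp [sq]

end Matrix.IsHermitian

theorem exists_interpolation_linear_add_sq {x y : ℝ} (hx : x ≠ 0) (hy : y ≠ 0) (f : ℝ → ℝ) :
    ∃ α β : ℝ, f x = α * x + β * x ^ 2 ∧ f y = α * y + β * y ^ 2 := by
  by_cases hxy : x = y
  · subst hxy
    have hfx : f x = f x / x * x + 0 * x ^ 2 := by simp [hx]
    exact ⟨f x / x, 0, hfx, hfx⟩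
  · have hxy' : x - y ≠ 0 := sub_ne_zero.mpr hxy
    refine ⟨(f x * y ^ 2 - f y * x ^ 2) / (x * y * (y - x)),
      (f y * x - f x * y) / (x * y * (y - x)), ?_, ?_⟩ <;>
    · field_simp
      ring

theorem sum_comp_eq_of_sum_eq_of_sum_sq_eq {ι : Type*} [Fintype ι] {e : ι → ℝ} {x y : ℝ}
    (hx : x ≠ 0) (hy : y ≠ 0) (he : ∀ i, e i = 0 ∨ e i = x ∨ e i = y)
    (h₁ : ∑ i, e i = x + y) (h₂ : ∑ i, e i ^ 2 = x ^ 2 + y ^ 2) {f : ℝ → ℝ} (hf : f 0 = 0) :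
    ∑ i, f (e i) = f x + f y := by
  obtain ⟨α, β, hfx, hfy⟩ := exists_interpolation_linear_add_sq hx hy f
  have hfe (i : ι) : f (e i) = α * e i + β * e i ^ 2 := by
    rcases he i with h | h | h <;> simp [h, hf, hfx, hfy]
  simp only [hfe, Finset.sum_add_distrib, ← Finset.mul_sum]
  rw [h₁, h₂, hfx, hfy]
  ring

theorem one_add_rpow_add_one_sub_rpow_lt_two {p ε : ℝ} (hp0 : 0 < p) (hp1 : p < 1) (hε : ε ≠ 0)
    (hε1 : |ε| ≤ 1) : (1 + ε) ^ p + (1 - ε) ^ p < 2 := by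
  obtain ⟨hε₁, hε₂⟩ := abs_le.mp hε1
  have h := (Real.strictConcaveOn_rpow hp0 hp1).2 (Set.mem_Ici.mpr (by linarith : (0 : ℝ) ≤ 1 + ε))
    (Set.mem_Ici.mpr (by linarith : (0 : ℝ) ≤ 1 - ε)) (by contrapose! hε; linarith)
    (by norm_num : (0 : ℝ) < 1 / 2) (by norm_num : (0 : ℝ) < 1 / 2) (by norm_num)
  have hmid : (1 / 2 : ℝ) • (1 + ε) + (1 / 2 : ℝ) • (1 - ε) = 1 := by
    simp only [smul_eq_mul]
    ring
  rw [hmid] at h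
  simp only [smul_eq_mul, Real.one_rpow] at h
  linarith

section pairBlock

variable {n : Type*} [DecidableEq n]

def pairBlock (i j : n) (ε : ℝ) : Matrix n n ℝ :=
  single i i 1 + single j j 1 + ε • (single i j 1 + single j i 1)

variable {i j : n} (ε : ℝ)

theorem pairBlock_apply_self (hij : i ≠ j) (k : n) :
    pairBlock i j ε k k = pairBlock i j 0 k k := by
  simp only [pairBlock, smul_add, smul_single, smul_eq_mul, mul_one, Matrix.add_apply,
    single_apply, and_self, zero_smul, add_zero, Matrix.zero_apply, add_eq_left]
  grind

variable [Fintype n]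

theorem posSemidef_pairBlock (hε : |ε| ≤ 1) : (pairBlock i j ε).PosSemidef := by
  refine PosSemidef.of_dotProduct_mulVec_nonneg ?_ fun x => ?_
  · simp only [IsHermitian, pairBlock, conjTranspose_add, conjTranspose_smul,
      conjTranspose_single, star_trivial]
    rw [add_comm (single j i 1)]
  · have hε2 : ε ^ 2 ≤ 1 := by rwa [sq_le_one_iff_abs_le_one]
    simp only [star_trivial, pairBlock, smul_add, smul_single, smul_eq_mul, mul_one, add_mulVec,
      single_mulVec_eq, one_mul, dotProduct_add, dotProduct_smul, dotProduct_single]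
    nlinarith [sq_nonneg (x i + ε * x j), mul_nonneg (sub_nonneg.2 hε2) (sq_nonneg (x j))]

variable (hij : i ≠ j)
include hij

theorem trace_pairBlock : trace (pairBlock i j ε) = 2 := by
  norm_num [pairBlock, trace_single_eq_of_ne, hij, hij.symm]

theorem pairBlock_mul_pairBlock_zero : pairBlock i j ε * pairBlock i j 0 = pairBlock i j ε := by
  simp only [pairBlock, add_mul, mul_add, Matrix.smul_mul, Matrix.mul_smul, single_mul_single_same,
    single_mul_single_of_ne, hij, hij.symm, ne_eq, not_false_eq_true, mul_one]
  module

theorem pairBlock_mul_self : pairBlock i j ε * pairBlock i j ε =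
    (2 : ℝ) • pairBlock i j ε - (1 - ε ^ 2) • pairBlock i j 0 := by
  simp only [pairBlock, add_mul, mul_add, Matrix.smul_mul, Matrix.mul_smul, single_mul_single_same,
    single_mul_single_of_ne, hij, hij.symm, ne_eq, not_false_eq_true, mul_one]
  module

theorem aeval_pairBlock :
    aeval (pairBlock i j ε) (X * (X - C (1 + ε)) * (X - C (1 - ε))) = 0 := by
  have hcube : pairBlock i j ε * pairBlock i j ε * pairBlock i j ε =
      (2 : ℝ) • (pairBlock i j ε * pairBlock i j ε) - (1 - ε ^ 2) • pairBlock i j ε := by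
    conv_lhs => rw [mul_assoc, pairBlock_mul_self ε hij, mul_sub, Matrix.mul_smul,
      Matrix.mul_smul, pairBlock_mul_pairBlock_zero ε hij]
  simp only [map_mul, map_sub, aeval_X, aeval_C, Algebra.algebraMap_eq_smul_one, mul_sub, sub_mul,
    Matrix.mul_smul, Matrix.smul_mul, mul_one, hcube]
  module

theorem sum_sq_pairBlock_sub_pairBlock_zero :
    ∑ k, ∑ l, (pairBlock i j ε k l - pairBlock i j 0 k l) ^ 2 = 2 * ε ^ 2 := by
  simp only [pairBlock, smul_add, smul_single, smul_eq_mul, mul_one, Matrix.add_apply,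
    single_apply, ite_and, zero_smul, add_zero, Matrix.zero_apply, add_sub_cancel_left]
  simp [add_sq, ite_pow, Finset.sum_add_distrib, hij.symm, ← two_mul]

theorem sum_eigenvalues_comp_pairBlock (hε : |ε| < 1) {A : Matrix n n ℝ} (hA : A.IsHermitian)
    (hAε : A = pairBlock i j ε) {f : ℝ → ℝ} (hf : f 0 = 0) :
    ∑ k, f (hA.eigenvalues k) = f (1 + ε) + f (1 - ε) := by
  subst hAε
  obtain ⟨hε₁, hε₂⟩ := abs_lt.mp hε
  refine sum_comp_eq_of_sum_eq_of_sum_sq_eq (by linarith) (by linarith) (fun k => ?_) ?_ ?_ hf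
  · have hroot := Matrix.IsHermitian.eval_eigenvalues_eq_zero hA (aeval_pairBlock ε hij) k
    simp only [eval_mul, eval_X, eval_sub, eval_C, mul_eq_zero, sub_eq_zero] at hroot
    tauto
  · have htrace := hA.trace_eq_sum_eigenvalues
    simp only [trace_pairBlock ε hij, RCLike.ofReal_real_eq_id, id_eq] at htrace
    linarith
  · rw [← hA.trace_mul_self_eq_sum_sq_eigenvalues, pairBlock_mul_self ε hij, trace_sub,
      trace_smul, trace_smul, trace_pairBlock ε hij, trace_pairBlock 0 hij, smul_eq_mul,
      smul_eq_mul]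
    ring

end pairBlock

/-- For `d ≥ 3` and `0 < p < 1`, the matrix `W̄ = diag(1, 1, 0, …, 0)` is not a local
minimum of the Schatten-`p` quasi-norm on the constraint set
`C_d = {W PSD : W₁₁ = W₂₂, W₁₁ = Wₖₖ + 1 for k = 3, …, d}`: its Schatten-`p` quasi-norm
(to the power `p`) equals `2`, yet arbitrarily close to it (in Frobenius norm) there are
matrices in `C_d` whose eigenvalues `λₖ` satisfy `Σₖ λₖ^p < 2`. -/
theorem stmt4 {d : ℕ} (hd : 3 ≤ d) (p : ℝ) (hp0 : 0 < p) (hp1 : p < 1)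
    (Wbar : Matrix (Fin d) (Fin d) ℝ)
    (hWbar : Wbar = Matrix.diagonal (fun k : Fin d => if (k : ℕ) < 2 then (1 : ℝ) else 0))
    (hWbar_psd : Wbar.PosSemidef) :
    (∑ k, (hWbar_psd.1.eigenvalues k) ^ p) = 2 ∧
    ∀ δ : ℝ, 0 < δ → ∃ (W : Matrix (Fin d) (Fin d) ℝ) (hW_psd : W.PosSemidef),
      W ⟨0, by omega⟩ ⟨0, by omega⟩ = W ⟨1, by omega⟩ ⟨1, by omega⟩ ∧
      (∀ k : Fin d, 2 ≤ (k : ℕ) → W ⟨0, by omega⟩ ⟨0, by omega⟩ = W k k + 1) ∧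
      Real.sqrt (∑ i, ∑ j, (W i j - Wbar i j) ^ 2) < δ ∧
      (∑ k, (hW_psd.1.eigenvalues k) ^ p) < 2 := by
  have h01 : (⟨0, by omega⟩ : Fin d) ≠ ⟨1, by omega⟩ := by simp
  have hWbar_eq : Wbar = pairBlock ⟨0, by omega⟩ ⟨1, by omega⟩ 0 := by
    ext k l
    simp only [hWbar, Order.lt_two_iff, diagonal_apply, Fin.ext_iff, pairBlock, smul_add,
      zero_smul, add_zero, Matrix.add_apply, single_apply, Matrix.zero_apply]
    split_ifs <;> norm_num <;> omega
  have sum_rpow {ε : ℝ} (hε : |ε| < 1) {A : Matrix (Fin d) (Fin d) ℝ} (hA : A.IsHermitian)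
      (hAε : A = pairBlock ⟨0, by omega⟩ ⟨1, by omega⟩ ε) :
      ∑ k, hA.eigenvalues k ^ p = (1 + ε) ^ p + (1 - ε) ^ p :=
    sum_eigenvalues_comp_pairBlock ε h01 hε hA hAε (f := (· ^ p)) (Real.zero_rpow hp0.ne')
  refine ⟨?_, fun δ hδ => ?_⟩
  · rw [sum_rpow (by simp) hWbar_psd.1 hWbar_eq]
    norm_num
  set ε : ℝ := min (1 / 2) (δ / 2)
  have hε0 : 0 < ε := by positivity
  have hε1 : |ε| < 1 := by rw [abs_of_pos hε0]; linarith [min_le_left (1 / 2 : ℝ) (δ / 2)]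
  refine ⟨pairBlock ⟨0, by omega⟩ ⟨1, by omega⟩ ε, posSemidef_pairBlock ε hε1.le, ?_,
    fun k hk => ?_, ?_, ?_⟩
  · simp [pairBlock_apply_self ε h01, ← hWbar_eq, hWbar]
  · simp [pairBlock_apply_self ε h01, ← hWbar_eq, hWbar]
    omega
  · rw [hWbar_eq, sum_sq_pairBlock_sub_pairBlock_zero ε h01, Real.sqrt_lt' hδ]
    nlinarith [min_le_right (1 / 2 : ℝ) (δ / 2)]
  · rw [sum_rpow hε1 _ rfl]
    exact one_add_rpow_add_one_sub_rpow_lt_two hp0 hp1 hε0.ne' hε1.le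
end

section
/- Let A₁, …, A_m ∈ ℝ^{d×d} be symmetric matrices and y₁, …, y_m ∈ ℝ. Suppose W* ∈ ℝ^{d×d} is positive semidefinite with ⟨A_i, W*⟩ = y_i for all i, and suppose there exists a sequence of vectors ν₁, ν₂, … ∈ ℝ^m such that for every n the matrix I − Σ_{i=1}^m (ν_n)_i·A_i is positive semidefinite, and tr((I − Σ_{i=1}^m (ν_n)_i·A_i)·W*) → 0 as n → ∞. Then W* has minimal nuclear norm among feasible positive semidefinite matrices: for every positive semidefinite W ∈ ℝ^{d×d} with ⟨A_i, W⟩ = y_i for all i, tr(W*) ≤ tr(W). -/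
/-!
For every feasible `W` and every `ν`, `tr W = tr ((I - ∑ νᵢ Aᵢ) W) + ∑ νᵢ yᵢ`; when both
`W` and `I - ∑ νᵢ Aᵢ` are PSD the first summand is nonnegative (weak duality:
`∑ νᵢ yᵢ ≤ tr W`). Applied to `W*`, the same identity says that the duality gap
`tr W* - ∑ (νₙ)ᵢ yᵢ` equals `tr ((I - ∑ (νₙ)ᵢ Aᵢ) W*)`, which tends to `0`.
-/

open Matrix Filter Topology

open scoped MatrixOrder ComplexOrder in
theorem Matrix.PosSemidef.trace_mul_nonneg {𝕜 n : Type*} [RCLike 𝕜] [Fintype n]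
    {P Q : Matrix n n 𝕜} (hP : P.PosSemidef) (hQ : Q.PosSemidef) : 0 ≤ (P * Q).trace := by
  classical
  obtain ⟨C, rfl⟩ := CStarAlgebra.nonneg_iff_eq_star_mul_self.mp hQ.nonneg
  rw [star_eq_conjTranspose, ← mul_assoc, trace_mul_comm, ← mul_assoc]
  exact (hP.mul_mul_conjTranspose_same C).trace_nonneg

theorem Matrix.trace_one_sub_sum_smul_mul {R n ι : Type*} [CommRing R] [Fintype n]
    [DecidableEq n] [Fintype ι] {A : ι → Matrix n n R} {y : ι → R} (hA : ∀ i, (A i).IsSymm)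
    {W : Matrix n n R} (hW : ∀ i, ((A i)ᵀ * W).trace = y i) (ν : ι → R) :
    ((1 - ∑ i, ν i • A i) * W).trace = W.trace - ∑ i, ν i * y i := by
  simp only [sub_mul, one_mul, trace_sub, Finset.sum_mul, trace_sum, smul_mul, trace_smul,
    smul_eq_mul, ← hW, (hA _).eq]

theorem Matrix.sum_mul_le_trace_of_posSemidef {n ι : Type*} [Fintype n] [DecidableEq n]
    [Fintype ι] {A : ι → Matrix n n ℝ} {y : ι → ℝ} (hA : ∀ i, (A i).IsSymm) {ν : ι → ℝ}
    (hν : (1 - ∑ i, ν i • A i).PosSemidef) {W : Matrix n n ℝ} (hW : W.PosSemidef)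
    (hW_feas : ∀ i, ((A i)ᵀ * W).trace = y i) :
    ∑ i, ν i * y i ≤ W.trace := by
  have := hν.trace_mul_nonneg hW
  rw [trace_one_sub_sum_smul_mul hA hW_feas] at this
  linarith

theorem stmt5_general {d m : ℕ}
    (A : Fin m → Matrix (Fin d) (Fin d) ℝ) (y : Fin m → ℝ)
    (hA_symm : ∀ i, (A i).IsSymm)
    (Wstar : Matrix (Fin d) (Fin d) ℝ)
    (hW_feas : ∀ i, ((A i)ᵀ * Wstar).trace = y i)
    (ν : ℕ → Fin m → ℝ)
    (hν_psd : ∀ n, ((1 : Matrix (Fin d) (Fin d) ℝ) - ∑ i, ν n i • A i).PosSemidef)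
    (hν_lim : Tendsto
      (fun n => (((1 : Matrix (Fin d) (Fin d) ℝ) - ∑ i, ν n i • A i) * Wstar).trace)
      atTop (nhds 0)) :
    ∀ W : Matrix (Fin d) (Fin d) ℝ, W.PosSemidef →
      (∀ i, ((A i)ᵀ * W).trace = y i) → Wstar.trace ≤ W.trace := by
  intro W hW hW'_feas
  have hgap : Tendsto (fun n => ∑ i, ν n i * y i) atTop (𝓝 Wstar.trace) := by
    simpa only [trace_one_sub_sum_smul_mul hA_symm hW_feas, sub_sub_cancel, sub_zero] using
      (tendsto_const_nhds (x := Wstar.trace)).sub hν_lim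
  exact le_of_tendsto hgap <| Eventually.of_forall fun n =>
    sum_mul_le_trace_of_posSemidef hA_symm (hν_psd n) hW hW'_feas

/-- Dual-certificate lemma: if `W*` is PSD and feasible (`⟨Aᵢ, W*⟩ = yᵢ`), and there is a
sequence `νₙ ∈ ℝᵐ` with `I − Σᵢ (νₙ)ᵢ Aᵢ` PSD and `tr((I − Σᵢ (νₙ)ᵢ Aᵢ)·W*) → 0`, then
`W*` has minimal trace (= nuclear norm for PSD matrices) among feasible PSD matrices. -/
theorem stmt5 {d m : ℕ}
    (A : Fin m → Matrix (Fin d) (Fin d) ℝ) (y : Fin m → ℝ)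
    (hA_symm : ∀ i, (A i).IsSymm)
    (Wstar : Matrix (Fin d) (Fin d) ℝ)
    (hW_psd : Wstar.PosSemidef)
    (hW_feas : ∀ i, ((A i)ᵀ * Wstar).trace = y i)
    (ν : ℕ → Fin m → ℝ)
    (hν_psd : ∀ n, ((1 : Matrix (Fin d) (Fin d) ℝ) - ∑ i, ν n i • A i).PosSemidef)
    (hν_lim : Tendsto
      (fun n => (((1 : Matrix (Fin d) (Fin d) ℝ) - ∑ i, ν n i • A i) * Wstar).trace)
      atTop (nhds 0)) :
    ∀ W : Matrix (Fin d) (Fin d) ℝ, W.PosSemidef →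
      (∀ i, ((A i)ᵀ * W).trace = y i) → Wstar.trace ≤ W.trace :=
  stmt5_general A y hA_symm Wstar hW_feas ν hν_psd hν_lim
end

section
/- Let α ≥ 1/2 be a real number, g : [0,∞) → ℝ a continuous function, and s : [0,∞) → ℝ a differentiable function satisfying s′(t) = (s(t)²)^α · g(t) for all t ≥ 0. Then s has the same sign as its initial value throughout: if s(0) = 0 then s(t) = 0 for all t ≥ 0; if s(0) > 0 then s(t) > 0 for all t ≥ 0; and if s(0) < 0 then s(t) < 0 for all t ≥ 0. -/
/-!
Since `2α ≥ 1`, the right-hand side obeys `|(s²)^α g| ≤ G M^(2α-1) |s|` wherever `|s| ≤ M` and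
`|g| ≤ G`, so Grönwall's inequality forces a solution vanishing at one time to vanish on every
compact interval after it, and, applied to the time-reversed solution, on every interval before
it. Hence a solution with `s(0) ≠ 0` has no zero, and keeps its sign by the intermediate value
theorem.
-/

open Set Real

theorem abs_rpow_sq_mul_le {α x y M G : ℝ} (hα : 1 / 2 ≤ α) (hx : |x| ≤ M) (hy : |y| ≤ G) :
    |(x ^ 2) ^ α * y| ≤ G * M ^ (2 * α - 1) * |x| := by
  have hpow : (x ^ 2) ^ α = |x| * |x| ^ (2 * α - 1) := by
    rw [← sq_abs x, ← rpow_natCast, ← rpow_mul (abs_nonneg x),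
      ← rpow_one_add' (abs_nonneg x) (by linarith)]
    norm_num
  have hpow_le : |x| ^ (2 * α - 1) ≤ M ^ (2 * α - 1) :=
    rpow_le_rpow (abs_nonneg x) hx (by linarith)
  have hM : 0 ≤ M := (abs_nonneg x).trans hx
  rw [abs_mul, abs_of_nonneg (by positivity), hpow]
  calc |x| * |x| ^ (2 * α - 1) * |y| ≤ |x| * M ^ (2 * α - 1) * G := by gcongr
    _ = G * M ^ (2 * α - 1) * |x| := by ring

theorem eqOn_zero_of_hasDerivWithinAt_rpow_sq_mul {α a b : ℝ} (hα : 1 / 2 ≤ α) {f φ : ℝ → ℝ}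
    (hf : ContinuousOn f (Icc a b)) (hφ : ContinuousOn φ (Icc a b))
    (hf' : ∀ t ∈ Ico a b, HasDerivWithinAt f ((f t ^ 2) ^ α * φ t) (Ici t) t)
    (ha : f a = 0) : EqOn f 0 (Icc a b) := by
  obtain ⟨M, hM⟩ := isCompact_Icc.exists_bound_of_continuousOn hf
  obtain ⟨G, hG⟩ := isCompact_Icc.exists_bound_of_continuousOn hφ
  intro t ht
  have hbound := norm_le_gronwallBound_of_norm_deriv_right_le (δ := 0) (ε := 0)
    (K := G * M ^ (2 * α - 1)) hf hf' (by simp [ha])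
    (fun u hu => by
      simpa using abs_rpow_sq_mul_le hα (hM u (Ico_subset_Icc_self hu))
        (hG u (Ico_subset_Icc_self hu))) t ht
  rw [gronwallBound_ε0_δ0] at hbound
  exact norm_le_zero_iff.mp hbound

theorem continuousOn_Ici_of_hasDerivAt_rpow_sq_mul {α : ℝ} {g s : ℝ → ℝ}
    (hs : ∀ t : ℝ, 0 ≤ t → HasDerivAt s ((s t ^ 2) ^ α * g t) t) : ContinuousOn s (Ici 0) :=
  fun t ht => (hs t ht).continuousAt.continuousWithinAt

section Solution

variable {α : ℝ} {g s : ℝ → ℝ} (hα : 1 / 2 ≤ α) (hg : ContinuousOn g (Ici 0))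
  (hs : ∀ t : ℝ, 0 ≤ t → HasDerivAt s ((s t ^ 2) ^ α * g t) t)
include hα hg hs

theorem eq_zero_of_le_of_hasDerivAt_rpow_sq_mul {t₀ t : ℝ} (ht₀ : 0 ≤ t₀) (hzero : s t₀ = 0)
    (hle : t₀ ≤ t) : s t = 0 := by
  have hsub : Icc t₀ t ⊆ Ici 0 := fun u hu => ht₀.trans hu.1
  exact eqOn_zero_of_hasDerivWithinAt_rpow_sq_mul hα
    ((continuousOn_Ici_of_hasDerivAt_rpow_sq_mul hs).mono hsub) (hg.mono hsub)
    (fun u hu => (hs u (ht₀.trans hu.1)).hasDerivWithinAt) hzero ⟨hle, le_rfl⟩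

theorem eq_zero_of_ge_of_hasDerivAt_rpow_sq_mul {t₀ t : ℝ} (hzero : s t₀ = 0) (ht : 0 ≤ t)
    (hle : t ≤ t₀) : s t = 0 := by
  have hmaps : MapsTo (t₀ - ·) (Icc 0 (t₀ - t)) (Ici 0) := fun τ hτ => by
    simp only [mem_Icc] at hτ; simp only [mem_Ici]; linarith
  have hreversed : ∀ τ ∈ Ico 0 (t₀ - t), HasDerivWithinAt (fun τ => s (t₀ - τ))
      ((s (t₀ - τ) ^ 2) ^ α * -g (t₀ - τ)) (Ici τ) τ := by
    intro τ hτ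
    have hchain := (hs (t₀ - τ) (hmaps (Ico_subset_Icc_self hτ))).scomp τ
      ((hasDerivAt_id τ).const_sub t₀)
    simpa [Function.comp_def] using hchain.hasDerivWithinAt
  have h := eqOn_zero_of_hasDerivWithinAt_rpow_sq_mul hα
    ((continuousOn_Ici_of_hasDerivAt_rpow_sq_mul hs).comp (by fun_prop) hmaps)
    (hg.neg.comp (by fun_prop) hmaps) hreversed (by simpa using hzero)
    ⟨sub_nonneg.mpr hle, le_rfl⟩
  simpa using h

theorem eq_zero_of_eq_zero_of_hasDerivAt_rpow_sq_mul {t₀ : ℝ} (ht₀ : 0 ≤ t₀) (hzero : s t₀ = 0)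
    {t : ℝ} (ht : 0 ≤ t) : s t = 0 := by
  rcases le_total t₀ t with hle | hle
  · exact eq_zero_of_le_of_hasDerivAt_rpow_sq_mul hα hg hs ht₀ hzero hle
  · exact eq_zero_of_ge_of_hasDerivAt_rpow_sq_mul hα hg hs hzero ht hle

end Solution

/-- Sign preservation for the scalar ODE `s′(t) = (s(t)²)^α · g(t)` with `α ≥ 1/2` and
`g` continuous on `[0, ∞)`: a (globally defined) solution keeps the sign of its initial
value for all `t ≥ 0`. -/
theorem stmt6 (α : ℝ) (hα : 1 / 2 ≤ α) (g s : ℝ → ℝ)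
    (hg : ContinuousOn g (Set.Ici 0))
    (hs : ∀ t : ℝ, 0 ≤ t → HasDerivAt s ((s t ^ 2) ^ α * g t) t) :
    (s 0 = 0 → ∀ t : ℝ, 0 ≤ t → s t = 0) ∧
    (0 < s 0 → ∀ t : ℝ, 0 ≤ t → 0 < s t) ∧
    (s 0 < 0 → ∀ t : ℝ, 0 ≤ t → s t < 0) := by
  have hsc := continuousOn_Ici_of_hasDerivAt_rpow_sq_mul hs
  have hvanish {t₀ : ℝ} (ht₀ : 0 ≤ t₀) (hzero : s t₀ = 0) : s 0 = 0 :=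
    eq_zero_of_eq_zero_of_hasDerivAt_rpow_sq_mul hα hg hs ht₀ hzero le_rfl
  refine ⟨fun h0 t ht => eq_zero_of_eq_zero_of_hasDerivAt_rpow_sq_mul hα hg hs le_rfl h0 ht,
    fun h0 t ht => ?_, fun h0 t ht => ?_⟩
  · by_contra! hst
    obtain ⟨t₀, ht₀, hzero⟩ :=
      intermediate_value_Icc' ht (hsc.mono Icc_subset_Ici_self) ⟨hst, h0.le⟩
    exact h0.ne' (hvanish ht₀.1 hzero)
  · by_contra! hst
    obtain ⟨t₀, ht₀, hzero⟩ :=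
      intermediate_value_Icc ht (hsc.mono Icc_subset_Ici_self) ⟨h0.le, hst⟩
    exact h0.ne (hvanish ht₀.1 hzero)
end

section
/- Let W : I → ℝ^{d×d'}, U : I → ℝ^{d×k}, σ : I → ℝ^k, V : I → ℝ^{d'×k} (k := min(d, d')) be differentiable maps on an open interval I such that for every t ∈ I, W(t) = U(t)·diag(σ(t))·V(t)ᵀ and the columns of U(t) and of V(t) are orthonormal. Then for every t ∈ I and every r ∈ {1, …, k}, the signed singular values evolve by σ_r′(t) = u_r(t)ᵀ · W′(t) · v_r(t), where u_r(t) and v_r(t) are the r-th columns of U(t) and V(t). -/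
/-!
Differentiating `σᵣ = uᵣ ⬝ᵥ (W *ᵥ vᵣ)` gives three terms. Since `W vᵣ = σᵣ uᵣ` and
`uᵣᵀ W = σᵣ vᵣᵀ`, the two outer ones are `σᵣ (uᵣ' ⬝ᵥ uᵣ)` and `σᵣ (vᵣ' ⬝ᵥ vᵣ)`, which vanish
because `uᵣ` and `vᵣ` stay unit vectors; only `uᵣ ⬝ᵥ (W' *ᵥ vᵣ)` survives.
-/

open Matrix Filter Topology

section Calculus

variable {m n : Type*} [Fintype n] {t : ℝ}

theorem hasDerivAt_dotProduct {u v : ℝ → n → ℝ} {u' v' : n → ℝ}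
    (hu : ∀ i, HasDerivAt (fun s => u s i) (u' i) t)
    (hv : ∀ i, HasDerivAt (fun s => v s i) (v' i) t) :
    HasDerivAt (fun s => u s ⬝ᵥ v s) (u' ⬝ᵥ v t + u t ⬝ᵥ v') t := by
  simp only [dotProduct, ← Finset.sum_add_distrib]
  exact HasDerivAt.fun_sum fun i _ => (hu i).mul (hv i)

theorem hasDerivAt_mulVec {M : ℝ → Matrix m n ℝ} {M' : Matrix m n ℝ}
    {v : ℝ → n → ℝ} {v' : n → ℝ}
    (hM : ∀ i j, HasDerivAt (fun s => M s i j) (M' i j) t)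
    (hv : ∀ j, HasDerivAt (fun s => v s j) (v' j) t) (i : m) :
    HasDerivAt (fun s => (M s *ᵥ v s) i) ((M' *ᵥ v t + M t *ᵥ v') i) t :=
  hasDerivAt_dotProduct (hM i) hv

theorem dotProduct_eq_zero_of_hasDerivAt_of_eventually_unit {u : ℝ → n → ℝ} {u' : n → ℝ}
    (hu : ∀ i, HasDerivAt (fun s => u s i) (u' i) t)
    (hunit : ∀ᶠ s in 𝓝 t, u s ⬝ᵥ u s = 1) :
    u' ⬝ᵥ u t = 0 := by
  have hderiv := ((hasDerivAt_dotProduct hu hu).congr_of_eventuallyEq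
    (hunit.mono fun _ h => h.symm)).unique (hasDerivAt_const t (1 : ℝ))
  rw [dotProduct_comm (u t)] at hderiv
  linarith

end Calculus

theorem transpose_mul_mul_apply_self {R m n k : Type*} [NonUnitalSemiring R] [Fintype m]
    [Fintype n] (A : Matrix m n R) (U : Matrix m k R) (V : Matrix n k R) (r : k) :
    (Uᵀ * A * V) r r = Uᵀ r ⬝ᵥ (A *ᵥ Vᵀ r) := by
  rw [dotProduct_mulVec, mul_apply']
  rfl

section SVD

variable {R m n k : Type*} [CommSemiring R] [DecidableEq k]

theorem dotProduct_col_self_of_transpose_mul_self_eq_one [Fintype m] {U : Matrix m k R}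
    (hU : Uᵀ * U = 1) (r : k) : Uᵀ r ⬝ᵥ Uᵀ r = 1 := by
  have h := congrFun (congrFun hU r) r
  rwa [mul_apply', one_apply_eq] at h

theorem mulVec_col_of_eq_mul_diagonal_mul_transpose [Fintype n] [Fintype k]
    {W : Matrix m n R} {U : Matrix m k R} {V : Matrix n k R} {σ : k → R}
    (hW : W = U * diagonal σ * Vᵀ) (hV : Vᵀ * V = 1) (r : k) :
    W *ᵥ Vᵀ r = σ r • Uᵀ r := by
  have hWV : W * V = U * diagonal σ := by rw [hW, Matrix.mul_assoc, hV, Matrix.mul_one]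
  ext p
  have h := congrFun (congrFun hWV p) r
  rwa [mul_apply', mul_diagonal, mul_comm] at h

theorem vecMul_col_of_eq_mul_diagonal_mul_transpose [Fintype m] [Fintype k]
    {W : Matrix m n R} {U : Matrix m k R} {V : Matrix n k R} {σ : k → R}
    (hW : W = U * diagonal σ * Vᵀ) (hU : Uᵀ * U = 1) (r : k) :
    Uᵀ r ᵥ* W = σ r • Vᵀ r := by
  rw [← mulVec_transpose]
  refine mulVec_col_of_eq_mul_diagonal_mul_transpose ?_ hU r
  rw [hW, transpose_mul, transpose_mul, diagonal_transpose, transpose_transpose, Matrix.mul_assoc]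

theorem diagonal_apply_eq_dotProduct_mulVec [Fintype m] [Fintype n] [Fintype k]
    {W : Matrix m n R} {U : Matrix m k R} {V : Matrix n k R} {σ : k → R}
    (hW : W = U * diagonal σ * Vᵀ) (hU : Uᵀ * U = 1) (hV : Vᵀ * V = 1) (r : k) :
    σ r = Uᵀ r ⬝ᵥ (W *ᵥ Vᵀ r) := by
  rw [mulVec_col_of_eq_mul_diagonal_mul_transpose hW hV, dotProduct_smul,
    dotProduct_col_self_of_transpose_mul_self_eq_one hU, smul_eq_mul, mul_one]

end SVD

theorem stmt8_general {d d' : ℕ}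
    (I : Set ℝ) (hI_open : IsOpen I)
    (W W' : ℝ → Matrix (Fin d) (Fin d') ℝ)
    (U U' : ℝ → Matrix (Fin d) (Fin (min d d')) ℝ)
    (σ σ' : ℝ → Fin (min d d') → ℝ)
    (V V' : ℝ → Matrix (Fin d') (Fin (min d d')) ℝ)
    (hW : ∀ t ∈ I, ∀ p q, HasDerivAt (fun s => W s p q) (W' t p q) t)
    (hU : ∀ t ∈ I, ∀ p q, HasDerivAt (fun s => U s p q) (U' t p q) t)
    (hσ : ∀ t ∈ I, ∀ r, HasDerivAt (fun s => σ s r) (σ' t r) t)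
    (hV : ∀ t ∈ I, ∀ p q, HasDerivAt (fun s => V s p q) (V' t p q) t)
    (hSVD : ∀ t ∈ I, W t = U t * Matrix.diagonal (σ t) * (V t)ᵀ)
    (hUorth : ∀ t ∈ I, (U t)ᵀ * U t = 1)
    (hVorth : ∀ t ∈ I, (V t)ᵀ * V t = 1) :
    ∀ t ∈ I, ∀ r, σ' t r = ((U t)ᵀ * W' t * V t) r r := by
  intro t ht r
  have hI : ∀ᶠ s in 𝓝 t, s ∈ I := hI_open.mem_nhds ht
  have hu p : HasDerivAt (fun s => (U s)ᵀ r p) ((U' t)ᵀ r p) t := hU t ht p r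
  have hv q : HasDerivAt (fun s => (V s)ᵀ r q) ((V' t)ᵀ r q) t := hV t ht q r
  have hu_perp : (U' t)ᵀ r ⬝ᵥ (U t)ᵀ r = 0 :=
    dotProduct_eq_zero_of_hasDerivAt_of_eventually_unit hu <|
      hI.mono fun s hs => dotProduct_col_self_of_transpose_mul_self_eq_one (hUorth s hs) r
  have hv_perp : (V' t)ᵀ r ⬝ᵥ (V t)ᵀ r = 0 :=
    dotProduct_eq_zero_of_hasDerivAt_of_eventually_unit hv <|
      hI.mono fun s hs => dotProduct_col_self_of_transpose_mul_self_eq_one (hVorth s hs) r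
  have hσ_eq : (fun s => (U s)ᵀ r ⬝ᵥ (W s *ᵥ (V s)ᵀ r)) =ᶠ[𝓝 t] fun s => σ s r :=
    hI.mono fun s hs => (diagonal_apply_eq_dotProduct_mulVec (hSVD s hs) (hUorth s hs)
      (hVorth s hs) r).symm
  have hderiv := ((hasDerivAt_dotProduct hu (hasDerivAt_mulVec (hW t ht) hv)).congr_of_eventuallyEq
    hσ_eq.symm).unique (hσ t ht r)
  have hu'_term : (U' t)ᵀ r ⬝ᵥ (W t *ᵥ (V t)ᵀ r) = 0 := by
    rw [mulVec_col_of_eq_mul_diagonal_mul_transpose (hSVD t ht) (hVorth t ht), dotProduct_smul,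
      hu_perp, smul_zero]
  have hv'_term : (U t)ᵀ r ⬝ᵥ (W t *ᵥ (V' t)ᵀ r) = 0 := by
    rw [dotProduct_mulVec, vecMul_col_of_eq_mul_diagonal_mul_transpose (hSVD t ht) (hUorth t ht),
      smul_dotProduct, dotProduct_comm, hv_perp, smul_zero]
  rw [← hderiv, dotProduct_add, hu'_term, hv'_term, transpose_mul_mul_apply_self, zero_add,
    add_zero]

/-- Along a differentiable SVD path `W(t) = U(t)·diag(σ(t))·V(t)ᵀ` (with orthonormal
columns of `U(t)` and `V(t)`), the signed singular values evolve by
`σᵣ′(t) = uᵣ(t)ᵀ · W′(t) · vᵣ(t)`. -/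
theorem stmt8 {d d' : ℕ}
    (I : Set ℝ) (hI_open : IsOpen I) (hI_conn : I.OrdConnected)
    (W W' : ℝ → Matrix (Fin d) (Fin d') ℝ)
    (U U' : ℝ → Matrix (Fin d) (Fin (min d d')) ℝ)
    (σ σ' : ℝ → Fin (min d d') → ℝ)
    (V V' : ℝ → Matrix (Fin d') (Fin (min d d')) ℝ)
    (hW : ∀ t ∈ I, ∀ p q, HasDerivAt (fun s => W s p q) (W' t p q) t)
    (hU : ∀ t ∈ I, ∀ p q, HasDerivAt (fun s => U s p q) (U' t p q) t)
    (hσ : ∀ t ∈ I, ∀ r, HasDerivAt (fun s => σ s r) (σ' t r) t)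
    (hV : ∀ t ∈ I, ∀ p q, HasDerivAt (fun s => V s p q) (V' t p q) t)
    (hSVD : ∀ t ∈ I, W t = U t * Matrix.diagonal (σ t) * (V t)ᵀ)
    (hUorth : ∀ t ∈ I, (U t)ᵀ * U t = 1)
    (hVorth : ∀ t ∈ I, (V t)ᵀ * V t = 1) :
    ∀ t ∈ I, ∀ r, σ' t r = ((U t)ᵀ * W' t * V t) r r :=
  stmt8_general I hI_open W W' U U' σ σ' V V' hW hU hσ hV hSVD hUorth hVorth
end

section
/- Let N ≥ 2 be an integer, k := min(d, d'), and let U ∈ ℝ^{d×k} and V ∈ ℝ^{d'×k} have orthonormal columns (UᵀU = VᵀV = I_k), σ ∈ ℝ^k, M ∈ ℝ^{d×d'}. Then Uᵀ · T_N(U, σ, V, M) · V = G ⊙ (UᵀMV), where ⊙ is the Hadamard (entrywise) product and G ∈ ℝ^{k×k} is the matrix with entries G_{r,r'} = Σ_{j=1}^N (σ_r²)^{(j−1)/N} · (σ_{r'}²)^{(N−j)/N}. In particular, for every r, u_rᵀ · T_N(U, σ, V, M) · v_r = N · (σ_r²)^{(N−1)/N} · u_rᵀ M v_r, where u_r, v_r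 are the r-th columns of U, V. -/
open Matrix

/-- `dpow σ β` is the `k×k` diagonal matrix with `r`-th diagonal entry `(σᵣ²)^β`
(real power, with the convention `x⁰ = 1`). -/
noncomputable def dpow {k : ℕ} (σ : Fin k → ℝ) (β : ℝ) : Matrix (Fin k) (Fin k) ℝ :=
  Matrix.diagonal (fun r => (σ r ^ 2) ^ β)

/-- `TN N U σ V M` is the right-hand side of the gradient-flow dynamics of the product
matrix of a depth-`N` matrix factorization with balanced initialization, expressed
through a singular value decomposition `W = U·diag(σ)·Vᵀ`:
`M·V·D^((N−1)/N)·Vᵀ + Σ_{j=2}^{N−1} U·D^((j−1)/N)·Uᵀ·M·V·D^((N−j)/N)·Vᵀ + U·D^((N−1)/N)·Uᵀ·M`,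
where `D^β = dpow σ β`. -/
noncomputable def TN {d d' k : ℕ} (N : ℕ) (U : Matrix (Fin d) (Fin k) ℝ)
    (σ : Fin k → ℝ) (V : Matrix (Fin d') (Fin k) ℝ) (M : Matrix (Fin d) (Fin d') ℝ) :
    Matrix (Fin d) (Fin d') ℝ :=
  M * V * dpow σ (((N : ℝ) - 1) / N) * Vᵀ +
  (∑ j ∈ Finset.Icc 2 (N - 1),
    U * dpow σ (((j : ℝ) - 1) / N) * Uᵀ * M * V * dpow σ (((N : ℝ) - (j : ℝ)) / N) * Vᵀ) +
  U * dpow σ (((N : ℝ) - 1) / N) * Uᵀ * M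

/-
Since `UᵀU = VᵀV = 1`, conjugating `T_N` by `Uᵀ · _ · V` collapses every summand to
`D^((j-1)/N) · (UᵀMV) · D^((N-j)/N)` with `D = diag(σ²)`, the two boundary terms being
the cases `j = 1` and `j = N` (where `D⁰ = 1`). A product of the form `diag(a) · A · diag(b)`
is the Hadamard product of `A` with `(aᵣ bᵣ')`, and on the diagonal the two powers of `σᵣ²`
combine to `(σᵣ²)^((N-1)/N)`, once for each of the `N` values of `j`.
-/

theorem Finset.sum_Icc_one_eq_add_sum_add {α : Type*} [AddCommMonoid α] (f : ℕ → α) {N : ℕ}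
    (hN : 2 ≤ N) :
    ∑ j ∈ Finset.Icc 1 N, f j = f 1 + ∑ j ∈ Finset.Icc 2 (N - 1), f j + f N := by
  have hsplit : Finset.Icc 1 N = insert 1 (insert N (Finset.Icc 2 (N - 1))) := by
    ext x
    simp only [Finset.mem_Icc, Finset.mem_insert]
    omega
  have h1 : 1 ∉ insert N (Finset.Icc 2 (N - 1)) := by
    simp only [Finset.mem_insert, Finset.mem_Icc]
    omega
  have hN' : N ∉ Finset.Icc 2 (N - 1) := by
    simp only [Finset.mem_Icc]
    omega
  rw [hsplit, Finset.sum_insert h1, Finset.sum_insert hN', add_comm (f N), add_assoc]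

theorem dpow_zero {k : ℕ} (σ : Fin k → ℝ) : dpow σ 0 = 1 := by
  simp only [dpow, Real.rpow_zero, diagonal_one]

theorem transpose_mul_TN_mul_eq_sum {d d' k N : ℕ} (hN : 2 ≤ N)
    {U : Matrix (Fin d) (Fin k) ℝ} {V : Matrix (Fin d') (Fin k) ℝ}
    (hU : Uᵀ * U = 1) (hV : Vᵀ * V = 1) (σ : Fin k → ℝ) (M : Matrix (Fin d) (Fin d') ℝ) :
    Uᵀ * TN N U σ V M * V = ∑ j ∈ Finset.Icc 1 N,
      dpow σ (((j : ℝ) - 1) / N) * (Uᵀ * M * V) * dpow σ (((N : ℝ) - (j : ℝ)) / N) := by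
  have hU' : ∀ {n : ℕ} (X : Matrix (Fin k) (Fin n) ℝ), Uᵀ * (U * X) = X := fun X => by
    rw [← Matrix.mul_assoc, hU, Matrix.one_mul]
  rw [Finset.sum_Icc_one_eq_add_sum_add _ hN]
  simp only [TN, Nat.cast_one, sub_self, zero_div, dpow_zero, Matrix.one_mul, Matrix.mul_one,
    Matrix.add_mul, Matrix.mul_add, Matrix.sum_mul, Matrix.mul_sum, Matrix.mul_assoc, hV, hU']

theorem sum_dpow_mul_mul_dpow {k : ℕ} {ι : Type*} (s : Finset ι) (σ : Fin k → ℝ)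
    (a b : ι → ℝ) (A : Matrix (Fin k) (Fin k) ℝ) :
    ∑ j ∈ s, dpow σ (a j) * A * dpow σ (b j) =
      hadamard (of fun r r' => ∑ j ∈ s, (σ r ^ 2) ^ a j * (σ r' ^ 2) ^ b j) A := by
  ext r r'
  simp only [Matrix.sum_apply, dpow, mul_diagonal, diagonal_mul, hadamard_apply, of_apply,
    Finset.sum_mul]
  exact Finset.sum_congr rfl fun j _ => by ring

theorem sum_Icc_rpow_mul_rpow {x : ℝ} (hx : 0 ≤ x) (N : ℕ) :
    ∑ j ∈ Finset.Icc 1 N, x ^ (((j : ℝ) - 1) / N) * x ^ (((N : ℝ) - (j : ℝ)) / N) =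
      N * x ^ (((N : ℝ) - 1) / N) := by
  have hterm : ∀ j ∈ Finset.Icc 1 N,
      x ^ (((j : ℝ) - 1) / N) * x ^ (((N : ℝ) - (j : ℝ)) / N) = x ^ (((N : ℝ) - 1) / N) := by
    intro j hj
    obtain ⟨h1j, hjN⟩ := Finset.mem_Icc.mp hj
    have h1j : (1 : ℝ) ≤ j := by exact_mod_cast h1j
    have hjN : (j : ℝ) ≤ N := by exact_mod_cast hjN
    rw [← Real.rpow_add_of_nonneg hx (by positivity) (div_nonneg (by linarith) N.cast_nonneg)]
    ring_nf
  rw [Finset.sum_congr rfl hterm, Finset.sum_const, Nat.card_Icc, Nat.add_sub_cancel,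
    nsmul_eq_mul]

/-- For orthonormal `U`, `V`: `Uᵀ·T_N(U,σ,V,M)·V = G ⊙ (UᵀMV)` where
`G_{r,r'} = Σ_{j=1}^N (σᵣ²)^((j−1)/N)·(σᵣ'²)^((N−j)/N)`; in particular the diagonal
entries satisfy `uᵣᵀ·T_N·vᵣ = N·(σᵣ²)^((N−1)/N)·uᵣᵀMvᵣ`. -/
theorem stmt9 {d d' : ℕ} (N : ℕ) (hN : 2 ≤ N)
    (U : Matrix (Fin d) (Fin (min d d')) ℝ) (V : Matrix (Fin d') (Fin (min d d')) ℝ)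
    (hU : Uᵀ * U = 1) (hV : Vᵀ * V = 1)
    (σ : Fin (min d d') → ℝ) (M : Matrix (Fin d) (Fin d') ℝ) :
    Uᵀ * TN N U σ V M * V =
      Matrix.hadamard
        (Matrix.of fun r r' : Fin (min d d') => ∑ j ∈ Finset.Icc 1 N,
          (σ r ^ 2) ^ (((j : ℝ) - 1) / N) * (σ r' ^ 2) ^ (((N : ℝ) - (j : ℝ)) / N))
        (Uᵀ * M * V) ∧
    ∀ r, (Uᵀ * TN N U σ V M * V) r r =
      (N : ℝ) * (σ r ^ 2) ^ (((N : ℝ) - 1) / N) * (Uᵀ * M * V) r r := by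
  have hadamard_eq := (transpose_mul_TN_mul_eq_sum hN hU hV σ M).trans
    (sum_dpow_mul_mul_dpow _ σ _ _ _)
  refine ⟨hadamard_eq, fun r => ?_⟩
  rw [hadamard_eq, hadamard_apply, of_apply, sum_Icc_rpow_mul_rpow (sq_nonneg _)]
end

section
/- Let ℓ : ℝ^{d×d'} → ℝ be differentiable, N ≥ 2 an integer, and let W, U, σ, V be a differentiable SVD path on [0,∞) such that for every t ≥ 0, W′(t) = −T_N(U(t), σ(t), V(t), ∇ℓ(W(t))), and such that for each r the map t ↦ u_r(t)ᵀ·∇ℓ(W(t))·v_r(t) is continuous. Then each signed singular value σ_r keeps the sign of its initial value: if σ_r(0) = 0 then σ_r(t) = 0 for all t ≥ 0; if σ_r(0) > 0 then σ_r(t) > 0 for all t ≥ 0; and if σ_r(0) < 0 then σ_r(t) < 0 for all t ≥ 0. In particular, for a non-degenerate factorization (N ≥ 2) singular values never change sign. -/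
/-!
Along an SVD path `σᵣ = uᵣᵀ W vᵣ`, and since unit singular vectors move orthogonally to
themselves, `σᵣ' = uᵣᵀ W' vᵣ`, which under the dynamics equals
`-N (σᵣ²)^((N-1)/N) · uᵣᵀ ∇ℓ(W) vᵣ`. For `N ≥ 2` the exponent `2(N-1)/N` is at least `1`, so
on every compact time interval `|σᵣ'| ≤ K |σᵣ|`. Grönwall's inequality, run forwards and
backwards in time, then shows that `σᵣ` vanishes at some time iff it vanishes at time `0`, and the
intermediate value theorem forbids a change of sign.
-/

open Matrix

open Set

theorem eq_zero_of_abs_deriv_le_mul_abs_self_of_eq_zero_left {f f' : ℝ → ℝ} {K a b : ℝ}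
    (hab : a ≤ b) (hd : ∀ x ∈ Icc a b, HasDerivAt f (f' x) x)
    (hK : ∀ x ∈ Icc a b, |f' x| ≤ K * |f x|) (hb : f b = 0) : f a = 0 := by
  have hmem : ∀ x ∈ Icc a b, a + b - x ∈ Icc a b := fun x hx =>
    ⟨by linarith [hx.2], by linarith [hx.1]⟩
  have hd' : ∀ x ∈ Icc a b, HasDerivAt (fun x => f (a + b - x)) (-f' (a + b - x)) x := by
    intro x hx
    simpa [Function.comp_def] using
      (hd _ (hmem x hx)).comp x ((hasDerivAt_id x).const_sub (a + b))
  have := eq_zero_of_abs_deriv_le_mul_abs_self_of_eq_zero_right (K := K)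
    (fun x hx => (hd' x hx).continuousAt.continuousWithinAt)
    (fun x hx => (hd' x (Ico_subset_Icc_self hx)).hasDerivWithinAt) (by simpa using hb)
    (fun x hx => by simpa using hK _ (hmem x (Ico_subset_Icc_self hx))) b ⟨hab, le_rfl⟩
  simpa using this

theorem eq_zero_iff_of_abs_deriv_le_mul_abs_self {f f' : ℝ → ℝ} {a t : ℝ} (ht : a ≤ t)
    (hd : ∀ x, a ≤ x → HasDerivAt f (f' x) x)
    (hK : ∀ T, ∃ K, ∀ x ∈ Icc a T, |f' x| ≤ K * |f x|) : f t = 0 ↔ f a = 0 := by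
  obtain ⟨K, hK⟩ := hK t
  refine ⟨eq_zero_of_abs_deriv_le_mul_abs_self_of_eq_zero_left ht (fun x hx => hd x hx.1) hK,
    fun ha => eq_zero_of_abs_deriv_le_mul_abs_self_of_eq_zero_right (K := K)
      (fun x hx => (hd x hx.1).continuousAt.continuousWithinAt)
      (fun x hx => (hd x hx.1).hasDerivWithinAt) ha
      (fun x hx => hK x (Ico_subset_Icc_self hx)) t ⟨ht, le_rfl⟩⟩

theorem pos_of_abs_deriv_le_mul_abs_self {f f' : ℝ → ℝ} {a t : ℝ} (ht : a ≤ t)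
    (hd : ∀ x, a ≤ x → HasDerivAt f (f' x) x)
    (hK : ∀ T, ∃ K, ∀ x ∈ Icc a T, |f' x| ≤ K * |f x|) (ha : 0 < f a) : 0 < f t := by
  by_contra! hft
  obtain ⟨s, hs, hfs⟩ := intermediate_value_Icc' ht
    (fun x hx => (hd x hx.1).continuousAt.continuousWithinAt) ⟨hft, ha.le⟩
  exact ha.ne' ((eq_zero_iff_of_abs_deriv_le_mul_abs_self hs.1 hd hK).1 hfs)

theorem neg_of_abs_deriv_le_mul_abs_self {f f' : ℝ → ℝ} {a t : ℝ} (ht : a ≤ t)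
    (hd : ∀ x, a ≤ x → HasDerivAt f (f' x) x)
    (hK : ∀ T, ∃ K, ∀ x ∈ Icc a T, |f' x| ≤ K * |f x|) (ha : f a < 0) : f t < 0 := by
  have := pos_of_abs_deriv_le_mul_abs_self (f := -f) (f' := -f') ht (fun x hx => (hd x hx).neg)
    (by simpa only [Pi.neg_apply, abs_neg] using hK) (by simpa using ha)
  simpa using this

theorem exists_abs_rpow_sq_mul_le_mul_abs {s : Set ℝ} {f g : ℝ → ℝ} {β : ℝ} (hs : IsCompact s)
    (hf : ContinuousOn f s) (hg : ContinuousOn g s) (hβ : 1 / 2 ≤ β) :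
    ∃ K, ∀ x ∈ s, |(f x ^ 2) ^ β * g x| ≤ K * |f x| := by
  have hcont : ContinuousOn (fun x => |f x| ^ (2 * β - 1) * g x) s :=
    ((Real.continuous_rpow_const (by linarith)).comp_continuousOn hf.abs).mul hg
  obtain ⟨K, hK⟩ := hs.exists_bound_of_continuousOn hcont
  refine ⟨K, fun x hx => ?_⟩
  have hsplit : (f x ^ 2) ^ β = |f x| ^ (2 * β - 1) * |f x| := by
    rw [← sq_abs, ← Real.rpow_natCast, ← Real.rpow_mul (abs_nonneg _),
      ← Real.rpow_add_one' (abs_nonneg _) (by linarith)]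
    norm_num
  rw [hsplit, mul_right_comm, abs_mul, abs_abs]
  exact mul_le_mul_of_nonneg_right (hK x hx) (abs_nonneg _)

theorem HasDerivAt.unique_of_eqOn_Ici {E : Type*} [NormedAddCommGroup E] [NormedSpace ℝ E]
    {f g : ℝ → E} {f' g' : E} {a t : ℝ} (hf : HasDerivAt f f' t) (hg : HasDerivAt g g' t)
    (hfg : EqOn f g (Ici a)) (ht : a ≤ t) : f' = g' :=
  (uniqueDiffOn_Ici a t ht).eq_deriv _
    (hf.hasDerivWithinAt.congr (fun _ hs => (hfg hs).symm) (hfg ht).symm)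
    hg.hasDerivWithinAt

theorem hasDerivAt_matrix_mul_apply {l m n : Type*} [Fintype m]
    {A : ℝ → Matrix l m ℝ} {B : ℝ → Matrix m n ℝ} {A' : Matrix l m ℝ} {B' : Matrix m n ℝ}
    {t : ℝ} (hA : ∀ i j, HasDerivAt (fun s => A s i j) (A' i j) t)
    (hB : ∀ i j, HasDerivAt (fun s => B s i j) (B' i j) t) (i : l) (j : n) :
    HasDerivAt (fun s => (A s * B s) i j) ((A' * B t + A t * B') i j) t := by
  simp only [mul_apply, Matrix.add_apply, ← Finset.sum_add_distrib]
  exact HasDerivAt.fun_sum fun k _ => (hA i k).fun_mul (hB k j)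

theorem transpose_mul_apply_self_comm {m k : Type*} [Fintype m] (A B : Matrix m k ℝ) (r : k) :
    (Aᵀ * B) r r = (Bᵀ * A) r r := by
  rw [← transpose_apply (Bᵀ * A), transpose_mul, transpose_transpose]

theorem transpose_deriv_mul_apply_self_eq_zero {m k : Type*} [Fintype m] [DecidableEq k]
    {A : ℝ → Matrix m k ℝ} {A' : Matrix m k ℝ} {a t : ℝ} (ht : a ≤ t)
    (hA : ∀ i j, HasDerivAt (fun s => A s i j) (A' i j) t)
    (horth : ∀ s, a ≤ s → (A s)ᵀ * A s = 1) (r : k) : (A'ᵀ * A t) r r = 0 := by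
  have hconst := (hasDerivAt_matrix_mul_apply (A := fun s => (A s)ᵀ) (A' := A'ᵀ)
    (fun i j => hA j i) hA r r).unique_of_eqOn_Ici (hasDerivAt_const t 1)
    (fun s hs => by simp [horth s hs]) ht
  rw [Matrix.add_apply, transpose_mul_apply_self_comm (A t)] at hconst
  linarith

theorem transpose_mul_mul_diagonal_mul_transpose_mul {m n k : Type*} [Fintype m] [Fintype n]
    [Fintype k] [DecidableEq k] {U : Matrix m k ℝ} {V : Matrix n k ℝ}
    (hU : Uᵀ * U = 1) (hV : Vᵀ * V = 1) (σ : k → ℝ) :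
    Uᵀ * (U * diagonal σ * Vᵀ) * V = diagonal σ := by
  simp only [Matrix.mul_assoc, hV, Matrix.mul_one, ← Matrix.mul_assoc Uᵀ U, hU, Matrix.one_mul]

theorem singularValue_deriv_eq {m n k : Type*} [Fintype m] [Fintype n] [Fintype k]
    [DecidableEq k] {W : ℝ → Matrix m n ℝ} {U : ℝ → Matrix m k ℝ} {σ : ℝ → k → ℝ}
    {V : ℝ → Matrix n k ℝ} {W' : Matrix m n ℝ} {U' : Matrix m k ℝ} {σ' : k → ℝ}
    {V' : Matrix n k ℝ} {a t : ℝ} (ht : a ≤ t)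
    (hW : ∀ p q, HasDerivAt (fun s => W s p q) (W' p q) t)
    (hU : ∀ p q, HasDerivAt (fun s => U s p q) (U' p q) t)
    (hσ : ∀ r, HasDerivAt (fun s => σ s r) (σ' r) t)
    (hV : ∀ p q, HasDerivAt (fun s => V s p q) (V' p q) t)
    (hSVD : ∀ s, a ≤ s → W s = U s * diagonal (σ s) * (V s)ᵀ)
    (hUorth : ∀ s, a ≤ s → (U s)ᵀ * U s = 1) (hVorth : ∀ s, a ≤ s → (V s)ᵀ * V s = 1)
    (r : k) : σ' r = ((U t)ᵀ * W' * V t) r r := by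
  have hdiag : ∀ s, a ≤ s → ((U s)ᵀ * W s * V s) r r = σ s r := fun s hs => by
    rw [hSVD s hs, transpose_mul_mul_diagonal_mul_transpose_mul (hUorth s hs) (hVorth s hs),
      diagonal_apply_eq]
  have hderiv := (hasDerivAt_matrix_mul_apply
    (hasDerivAt_matrix_mul_apply (A := fun s => (U s)ᵀ) (A' := U'ᵀ) (fun i j => hU j i) hW)
    hV r r).unique_of_eqOn_Ici (hσ r) hdiag ht
  -- the motion of the singular vectors is orthogonal to them, so only `W'` contributes
  have hUterm : (U'ᵀ * W t * V t) r r = 0 := by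
    rw [hSVD t ht, show U'ᵀ * (U t * diagonal (σ t) * (V t)ᵀ) * V t
      = U'ᵀ * U t * diagonal (σ t) by
        simp only [Matrix.mul_assoc, hVorth t ht, Matrix.mul_one],
      mul_diagonal, transpose_deriv_mul_apply_self_eq_zero ht hU hUorth, zero_mul]
  have hVterm : ((U t)ᵀ * W t * V') r r = 0 := by
    rw [hSVD t ht, show (U t)ᵀ * (U t * diagonal (σ t) * (V t)ᵀ) * V'
      = diagonal (σ t) * ((V t)ᵀ * V') by
        simp only [Matrix.mul_assoc, ← Matrix.mul_assoc (U t)ᵀ, hUorth t ht, Matrix.one_mul],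
      diagonal_mul, transpose_mul_apply_self_comm,
      transpose_deriv_mul_apply_self_eq_zero ht hV hVorth, mul_zero]
  rw [← hderiv]
  simp only [Matrix.add_apply, Matrix.add_mul, hUterm, hVterm]
  ring

theorem dpow_mul_mul_dpow_apply_self {k : ℕ} (σ : Fin k → ℝ) (a b : ℝ)
    (G : Matrix (Fin k) (Fin k) ℝ) (r : Fin k) :
    (dpow σ a * G * dpow σ b) r r = (σ r ^ 2) ^ a * G r r * (σ r ^ 2) ^ b := by
  rw [dpow, dpow, mul_diagonal, diagonal_mul]

theorem transpose_mul_TN_mul {d d' k : ℕ} (N : ℕ) {U : Matrix (Fin d) (Fin k) ℝ}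
    {V : Matrix (Fin d') (Fin k) ℝ} (hU : Uᵀ * U = 1) (hV : Vᵀ * V = 1) (σ : Fin k → ℝ)
    (M : Matrix (Fin d) (Fin d') ℝ) :
    Uᵀ * TN N U σ V M * V = dpow σ 0 * (Uᵀ * M * V) * dpow σ (((N : ℝ) - 1) / N) +
      (∑ j ∈ Finset.Icc 2 (N - 1),
        dpow σ (((j : ℝ) - 1) / N) * (Uᵀ * M * V) * dpow σ (((N : ℝ) - (j : ℝ)) / N)) +
      dpow σ (((N : ℝ) - 1) / N) * (Uᵀ * M * V) * dpow σ 0 := by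
  have hdpow0 : dpow σ 0 = 1 := by simp [dpow]
  have hU' : ∀ X : Matrix (Fin k) (Fin d') ℝ, Uᵀ * (U * X) = X := fun X => by
    rw [← Matrix.mul_assoc, hU, Matrix.one_mul]
  simp only [TN, hdpow0, Matrix.mul_add, Matrix.add_mul, Matrix.mul_sum, Matrix.sum_mul,
    Matrix.mul_assoc, hV, hU', Matrix.mul_one, Matrix.one_mul]

theorem transpose_mul_TN_mul_apply_self {d d' k : ℕ} {N : ℕ} (hN : 2 ≤ N)
    {U : Matrix (Fin d) (Fin k) ℝ} {V : Matrix (Fin d') (Fin k) ℝ} (hU : Uᵀ * U = 1)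
    (hV : Vᵀ * V = 1) (σ : Fin k → ℝ) (M : Matrix (Fin d) (Fin d') ℝ) (r : Fin k) :
    (Uᵀ * TN N U σ V M * V) r r =
      N * ((σ r ^ 2) ^ (((N : ℝ) - 1) / N) * (Uᵀ * M * V) r r) := by
  have hNR : (2 : ℝ) ≤ N := by exact_mod_cast hN
  -- `rpow_add'` needs a nonzero total exponent, as `σ r` may vanish
  have hterm : ∀ a b : ℝ, a + b = ((N : ℝ) - 1) / N →
      (dpow σ a * (Uᵀ * M * V) * dpow σ b) r r
        = (σ r ^ 2) ^ (((N : ℝ) - 1) / N) * (Uᵀ * M * V) r r := by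
    intro a b hab
    have hpos : 0 < ((N : ℝ) - 1) / N := div_pos (by linarith) (by linarith)
    rw [dpow_mul_mul_dpow_apply_self, mul_right_comm, ← Real.rpow_add' (sq_nonneg _)
      (hab ▸ hpos.ne'), hab]
  have hcard : ((Finset.Icc 2 (N - 1)).card : ℝ) = N - 2 := by
    rw [Nat.card_Icc, show N - 1 + 1 - 2 = N - 2 by omega, Nat.cast_sub hN, Nat.cast_ofNat]
  rw [transpose_mul_TN_mul N hU hV, Matrix.add_apply, Matrix.add_apply, Matrix.sum_apply,
    hterm _ _ (by ring), hterm _ _ (by ring),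
    Finset.sum_congr rfl fun j _ => hterm _ _ (by ring), Finset.sum_const, nsmul_eq_mul, hcard]
  ring

theorem stmt11_general {d d' : ℕ} (N : ℕ) (hN : 2 ≤ N)
    (gradℓ : Matrix (Fin d) (Fin d') ℝ → Matrix (Fin d) (Fin d') ℝ)
    (W W' : ℝ → Matrix (Fin d) (Fin d') ℝ)
    (U U' : ℝ → Matrix (Fin d) (Fin (min d d')) ℝ)
    (σ σ' : ℝ → Fin (min d d') → ℝ)
    (V V' : ℝ → Matrix (Fin d') (Fin (min d d')) ℝ)
    (hW : ∀ t : ℝ, 0 ≤ t → ∀ p q, HasDerivAt (fun s => W s p q) (W' t p q) t)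
    (hU : ∀ t : ℝ, 0 ≤ t → ∀ p q, HasDerivAt (fun s => U s p q) (U' t p q) t)
    (hσ : ∀ t : ℝ, 0 ≤ t → ∀ r, HasDerivAt (fun s => σ s r) (σ' t r) t)
    (hV : ∀ t : ℝ, 0 ≤ t → ∀ p q, HasDerivAt (fun s => V s p q) (V' t p q) t)
    (hSVD : ∀ t : ℝ, 0 ≤ t → W t = U t * Matrix.diagonal (σ t) * (V t)ᵀ)
    (hUorth : ∀ t : ℝ, 0 ≤ t → (U t)ᵀ * U t = 1)
    (hVorth : ∀ t : ℝ, 0 ≤ t → (V t)ᵀ * V t = 1)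
    (hdyn : ∀ t : ℝ, 0 ≤ t → W' t = -TN N (U t) (σ t) (V t) (gradℓ (W t)))
    (hcont : ∀ r, ContinuousOn
      (fun t => ((U t)ᵀ * gradℓ (W t) * V t) r r) (Set.Ici 0)) :
    ∀ r, (σ 0 r = 0 → ∀ t : ℝ, 0 ≤ t → σ t r = 0) ∧
         (0 < σ 0 r → ∀ t : ℝ, 0 ≤ t → 0 < σ t r) ∧
         (σ 0 r < 0 → ∀ t : ℝ, 0 ≤ t → σ t r < 0) := by
  intro r
  have hβ : 1 / 2 ≤ ((N : ℝ) - 1) / N := by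
    have hNR : (2 : ℝ) ≤ N := by exact_mod_cast hN
    rw [div_le_div_iff₀ two_pos (by linarith)]
    linarith
  have hode : ∀ t, 0 ≤ t → σ' t r = -N * ((σ t r ^ 2) ^ (((N : ℝ) - 1) / N) *
      ((U t)ᵀ * gradℓ (W t) * V t) r r) := fun t ht => by
    rw [singularValue_deriv_eq ht (hW t ht) (hU t ht) (hσ t ht) (hV t ht) hSVD hUorth hVorth,
      hdyn t ht, Matrix.mul_neg, Matrix.neg_mul, Matrix.neg_apply,
      transpose_mul_TN_mul_apply_self hN (hUorth t ht) (hVorth t ht), neg_mul]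
  have hbound : ∀ T, ∃ K, ∀ x ∈ Icc 0 T, |σ' x r| ≤ K * |σ x r| := fun T => by
    obtain ⟨K, hK⟩ := exists_abs_rpow_sq_mul_le_mul_abs isCompact_Icc
      (fun x hx => (hσ x hx.1 r).continuousAt.continuousWithinAt)
      ((hcont r).mono Icc_subset_Ici_self) hβ
    refine ⟨N * K, fun x hx => ?_⟩
    rw [hode x hx.1, abs_mul, abs_neg, Nat.abs_cast, mul_assoc]
    exact mul_le_mul_of_nonneg_left (hK x hx) (Nat.cast_nonneg N)
  have hd : ∀ t, 0 ≤ t → HasDerivAt (fun s => σ s r) (σ' t r) t := fun t ht => hσ t ht r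
  exact ⟨fun h0 t ht => (eq_zero_iff_of_abs_deriv_le_mul_abs_self ht hd hbound).2 h0,
    fun h0 t ht => pos_of_abs_deriv_le_mul_abs_self ht hd hbound h0,
    fun h0 t ht => neg_of_abs_deriv_le_mul_abs_self ht hd hbound h0⟩

/-- Under the deep-factorization gradient-flow dynamics (depth `N ≥ 2`) along a
differentiable SVD path on `[0, ∞)`, each signed singular value `σᵣ` keeps the sign of
its initial value: singular values never change sign. -/
theorem stmt11 {d d' : ℕ} (N : ℕ) (hN : 2 ≤ N)
    (ℓ : Matrix (Fin d) (Fin d') ℝ → ℝ)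
    (gradℓ : Matrix (Fin d) (Fin d') ℝ → Matrix (Fin d) (Fin d') ℝ)
    (hgrad : ∀ Wm H, HasDerivAt (fun s : ℝ => ℓ (Wm + s • H))
      (((gradℓ Wm)ᵀ * H).trace) 0)
    (W W' : ℝ → Matrix (Fin d) (Fin d') ℝ)
    (U U' : ℝ → Matrix (Fin d) (Fin (min d d')) ℝ)
    (σ σ' : ℝ → Fin (min d d') → ℝ)
    (V V' : ℝ → Matrix (Fin d') (Fin (min d d')) ℝ)
    (hW : ∀ t : ℝ, 0 ≤ t → ∀ p q, HasDerivAt (fun s => W s p q) (W' t p q) t)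
    (hU : ∀ t : ℝ, 0 ≤ t → ∀ p q, HasDerivAt (fun s => U s p q) (U' t p q) t)
    (hσ : ∀ t : ℝ, 0 ≤ t → ∀ r, HasDerivAt (fun s => σ s r) (σ' t r) t)
    (hV : ∀ t : ℝ, 0 ≤ t → ∀ p q, HasDerivAt (fun s => V s p q) (V' t p q) t)
    (hSVD : ∀ t : ℝ, 0 ≤ t → W t = U t * Matrix.diagonal (σ t) * (V t)ᵀ)
    (hUorth : ∀ t : ℝ, 0 ≤ t → (U t)ᵀ * U t = 1)
    (hVorth : ∀ t : ℝ, 0 ≤ t → (V t)ᵀ * V t = 1)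
    (hdyn : ∀ t : ℝ, 0 ≤ t → W' t = -TN N (U t) (σ t) (V t) (gradℓ (W t)))
    (hcont : ∀ r, ContinuousOn
      (fun t => ((U t)ᵀ * gradℓ (W t) * V t) r r) (Set.Ici 0)) :
    ∀ r, (σ 0 r = 0 → ∀ t : ℝ, 0 ≤ t → σ t r = 0) ∧
         (0 < σ 0 r → ∀ t : ℝ, 0 ≤ t → 0 < σ t r) ∧
         (σ 0 r < 0 → ∀ t : ℝ, 0 ≤ t → σ t r < 0) :=
  stmt11_general N hN gradℓ W W' U U' σ σ' V V' hW hU hσ hV hSVD hUorth hVorth hdyn hcont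
end

section
/- Let W, U, σ, V be a differentiable SVD path on an open interval I, and let t ∈ I be such that σ_r(t) ≠ 0 for all r and the squared values σ₁(t)², …, σ_k(t)² are pairwise distinct. Then, with S(t) := diag(σ(t)) and H(t) ∈ ℝ^{k×k} defined by H(t)_{r,r'} = (σ_{r'}(t)² − σ_r(t)²)^{−1} for r ≠ r' and H(t)_{r,r} = 0, the singular vectors satisfy: U′(t) = U(t)·(H(t) ⊙ [U(t)ᵀW′(t)V(t)S(t) + S(t)V(t)ᵀW′(t)ᵀU(t)]) + (I_d − U(t)U(t)ᵀ)·W′(t)·V(t)·S(t)^{−1}, and V′(t) = V(t)·(H(t) ⊙ [S(t)U(t)ᵀW′(t)V(t) + V(t)ᵀW′(t)ᵀU(t)S(t)]) + (I_{d'} − V(t)V(t)ᵀ)·W′(t)ᵀ·U(t)·S(t)^{−1}, where ⊙ is the Hadamard (entrywise) product. -/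
/-!
Write `A = UᵀU'` and `B = VᵀV'`; both are skew-symmetric because `UᵀU = VᵀV = 1` along the
path. Differentiating `W = U S Vᵀ` gives `Uᵀ W' V = A S + S' + S Bᵀ`, so the symmetrised bracket
`Uᵀ W' V S + S Vᵀ W'ᵀ U` equals `A S² − S² A + 2 S S'`, whose `(r, r')` entry off the diagonal is
`(σ_{r'}² − σ_r²) A_{r r'}`. Taking the Hadamard product with `H` therefore recovers `A`, the
component of `U'` along the columns of `U`. The orthogonal component is
`(I − UUᵀ) U' = (I − UUᵀ) W' V S⁻¹`, because `I − UUᵀ` annihilates `U`. The formula for `V'` is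
the same statement for the transposed path `Wᵀ = V S Uᵀ`.
-/

open Matrix Filter Topology

section EntrywiseDeriv

variable {𝕜 : Type*} [NontriviallyNormedField 𝕜] {l m n : Type*}

-- Matrices carry no canonical norm instance, so derivatives of matrix paths are taken entrywise.
def HasEntrywiseDerivAt (A : 𝕜 → Matrix m n 𝕜) (A' : Matrix m n 𝕜) (t : 𝕜) : Prop :=
  ∀ i j, HasDerivAt (fun s => A s i j) (A' i j) t

namespace HasEntrywiseDerivAt

variable {A : 𝕜 → Matrix l m 𝕜} {B : 𝕜 → Matrix m n 𝕜} {A' : Matrix l m 𝕜} {B' : Matrix m n 𝕜}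
  {t : 𝕜}

theorem const (M : Matrix m n 𝕜) (t : 𝕜) : HasEntrywiseDerivAt (fun _ => M) 0 t :=
  fun _ _ => hasDerivAt_const t _

theorem transpose (hA : HasEntrywiseDerivAt A A' t) :
    HasEntrywiseDerivAt (fun s => (A s)ᵀ) A'ᵀ t :=
  fun i j => hA j i

theorem mul [Fintype m] (hA : HasEntrywiseDerivAt A A' t) (hB : HasEntrywiseDerivAt B B' t) :
    HasEntrywiseDerivAt (fun s => A s * B s) (A' * B t + A t * B') t := by
  intro i j
  simp only [mul_apply, Matrix.add_apply, ← Finset.sum_add_distrib]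
  exact HasDerivAt.fun_sum fun k _ => (hA i k).fun_mul (hB k j)

theorem unique {B : 𝕜 → Matrix l m 𝕜} {B' : Matrix l m 𝕜}
    (hA : HasEntrywiseDerivAt A A' t) (hB : HasEntrywiseDerivAt B B' t) (hAB : A =ᶠ[𝓝 t] B) :
    A' = B' := by
  ext i j
  exact (hA i j).unique ((hB i j).congr_of_eventuallyEq
    (hAB.mono fun s hs => congrFun₂ hs i j))

end HasEntrywiseDerivAt

theorem hasEntrywiseDerivAt_diagonal [DecidableEq n] {σ : 𝕜 → n → 𝕜} {σ' : n → 𝕜} {t : 𝕜}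
    (hσ : ∀ r, HasDerivAt (fun s => σ s r) (σ' r) t) :
    HasEntrywiseDerivAt (fun s => diagonal (σ s)) (diagonal σ') t := by
  intro i j
  by_cases hij : i = j
  · subst hij
    simpa using hσ i
  · simpa [hij] using hasDerivAt_const t (0 : 𝕜)

theorem HasEntrywiseDerivAt.transpose_mul_skew [Fintype m] [DecidableEq n]
    {U : 𝕜 → Matrix m n 𝕜} {U' : Matrix m n 𝕜} {t : 𝕜} (hU : HasEntrywiseDerivAt U U' t)
    (horth : ∀ᶠ s in 𝓝 t, (U s)ᵀ * U s = 1) :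
    ((U t)ᵀ * U')ᵀ = -((U t)ᵀ * U') := by
  have h := (hU.transpose.mul hU).unique (.const 1 t) horth
  rw [transpose_mul, transpose_transpose]
  exact eq_neg_of_add_eq_zero_left h

end EntrywiseDeriv

theorem Matrix.diag_eq_zero_of_transpose_eq_neg {κ G : Type*} [AddGroup G] [IsAddTorsionFree G]
    {X : Matrix κ κ G} (hX : Xᵀ = -X) (r : κ) : X r r = 0 := by
  simpa [self_eq_neg] using congrFun₂ hX r r

section SVDAlgebra

variable {K : Type*} [Field K] {κ : Type*} [Fintype κ] [DecidableEq κ]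

def invSqGapMatrix (σ : κ → K) : Matrix κ κ K :=
  of fun r r' => if r = r' then 0 else (σ r' ^ 2 - σ r ^ 2)⁻¹

theorem invSqGapMatrix_hadamard {σ : κ → K} (hσ : ∀ r r', r ≠ r' → σ r ^ 2 ≠ σ r' ^ 2)
    {X : Matrix κ κ K} (hX : ∀ r, X r r = 0) (c : κ → K) :
    invSqGapMatrix σ ⊙ (X * diagonal (σ ^ 2) - diagonal (σ ^ 2) * X + diagonal c) = X := by
  ext r r'
  by_cases h : r = r'
  · subst h
    simp [invSqGapMatrix, hX]
  · have hgap : σ r' ^ 2 - σ r ^ 2 ≠ 0 := sub_ne_zero.mpr (hσ r' r (Ne.symm h))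
    simp only [invSqGapMatrix, hadamard_apply, of_apply, if_neg h, Matrix.add_apply,
      Matrix.sub_apply, mul_diagonal, diagonal_mul, diagonal_apply_ne _ h, Pi.pow_apply]
    field_simp
    ring

theorem svd_deriv_bracket_eq {A B : Matrix κ κ K} {σ σ' : κ → K} (hA : Aᵀ = -A) (hB : Bᵀ = -B) :
    let P := A * diagonal σ + diagonal σ' + diagonal σ * Bᵀ
    P * diagonal σ + diagonal σ * Pᵀ =
      A * diagonal (σ ^ 2) - diagonal (σ ^ 2) * A + diagonal (fun r => 2 * σ r * σ' r) := by
  intro P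
  ext r r'
  have hA' : A r' r = -A r r' := congrFun₂ hA r r'
  have hB' : B r' r = -B r r' := congrFun₂ hB r r'
  rcases eq_or_ne r r' with rfl | h
  · simp only [P, Matrix.add_apply, Matrix.sub_apply, transpose_apply, mul_diagonal,
      diagonal_mul, diagonal_apply_eq, Pi.pow_apply]
    linear_combination σ r ^ 2 * hA' + σ r ^ 2 * hB'
  · simp only [P, Matrix.add_apply, Matrix.sub_apply, transpose_apply, mul_diagonal,
      diagonal_mul, diagonal_apply_ne _ h, diagonal_apply_ne _ h.symm, hA', hB', Pi.pow_apply]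
    ring

variable {m n : Type*} [Fintype m] [Fintype n]

theorem transpose_mul_mul_eq_of_svd_deriv {U U' : Matrix m κ K} {V V' : Matrix n κ K}
    {σ σ' : κ → K} {W' : Matrix m n K} (hU : Uᵀ * U = 1) (hV : Vᵀ * V = 1)
    (hW' : W' = U' * diagonal σ * Vᵀ + U * diagonal σ' * Vᵀ + U * diagonal σ * V'ᵀ) :
    Uᵀ * W' * V = Uᵀ * U' * diagonal σ + diagonal σ' + diagonal σ * (Vᵀ * V')ᵀ := by
  simp only [hW', Matrix.mul_add, Matrix.add_mul, ← Matrix.mul_assoc, hU, Matrix.one_mul]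
  simp only [Matrix.mul_assoc, hV, Matrix.mul_one, transpose_mul, transpose_transpose]

theorem projection_mul_eq_of_svd_deriv [DecidableEq m] {U U' : Matrix m κ K}
    {V V' : Matrix n κ K} {σ σ' : κ → K} {W' : Matrix m n K} (hU : Uᵀ * U = 1) (hV : Vᵀ * V = 1)
    (hW' : W' = U' * diagonal σ * Vᵀ + U * diagonal σ' * Vᵀ + U * diagonal σ * V'ᵀ) :
    (1 - U * Uᵀ) * W' * V = (U' - U * (Uᵀ * U')) * diagonal σ := by
  have hker : (1 - U * Uᵀ) * U = 0 := by
    rw [Matrix.sub_mul, Matrix.one_mul, Matrix.mul_assoc, hU, Matrix.mul_one, sub_self]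
  simp only [hW', Matrix.mul_add, ← Matrix.mul_assoc, hker, Matrix.zero_mul, add_zero]
  simp only [Matrix.mul_assoc, hV, Matrix.mul_one, Matrix.sub_mul, Matrix.one_mul]

theorem svd_left_deriv_eq [DecidableEq m] [CharZero K] {U U' : Matrix m κ K}
    {V V' : Matrix n κ K} {σ σ' : κ → K} {W' : Matrix m n K} (hU : Uᵀ * U = 1) (hV : Vᵀ * V = 1)
    (hUskew : (Uᵀ * U')ᵀ = -(Uᵀ * U')) (hVskew : (Vᵀ * V')ᵀ = -(Vᵀ * V'))
    (hW' : W' = U' * diagonal σ * Vᵀ + U * diagonal σ' * Vᵀ + U * diagonal σ * V'ᵀ)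
    (hσ_ne : ∀ r, σ r ≠ 0) (hσ_distinct : ∀ r r', r ≠ r' → σ r ^ 2 ≠ σ r' ^ 2) :
    U' = U * invSqGapMatrix σ ⊙ (Uᵀ * W' * V * diagonal σ + diagonal σ * Vᵀ * W'ᵀ * U) +
      (1 - U * Uᵀ) * W' * V * (diagonal σ)⁻¹ := by
  have hbracket : Uᵀ * W' * V * diagonal σ + diagonal σ * Vᵀ * W'ᵀ * U =
      Uᵀ * U' * diagonal (σ ^ 2) - diagonal (σ ^ 2) * (Uᵀ * U') +
        diagonal (fun r => 2 * σ r * σ' r) := by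
    have hT : Vᵀ * W'ᵀ * U = (Uᵀ * W' * V)ᵀ := by
      simp only [transpose_mul, transpose_transpose, Matrix.mul_assoc]
    rw [Matrix.mul_assoc (diagonal σ) Vᵀ, Matrix.mul_assoc (diagonal σ), hT,
      transpose_mul_mul_eq_of_svd_deriv hU hV hW', svd_deriv_bracket_eq hUskew hVskew]
  have hσ_unit : IsUnit (diagonal σ).det := by
    rw [det_diagonal]
    exact (Finset.prod_ne_zero_iff.mpr fun r _ => hσ_ne r).isUnit
  rw [hbracket, invSqGapMatrix_hadamard hσ_distinct (diag_eq_zero_of_transpose_eq_neg hUskew),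
    projection_mul_eq_of_svd_deriv hU hV hW', Matrix.mul_assoc, mul_nonsing_inv _ hσ_unit,
    Matrix.mul_one, add_sub_cancel]

theorem svd_right_deriv_eq [DecidableEq n] [CharZero K] {U U' : Matrix m κ K}
    {V V' : Matrix n κ K} {σ σ' : κ → K} {W' : Matrix m n K} (hU : Uᵀ * U = 1) (hV : Vᵀ * V = 1)
    (hUskew : (Uᵀ * U')ᵀ = -(Uᵀ * U')) (hVskew : (Vᵀ * V')ᵀ = -(Vᵀ * V'))
    (hW' : W' = U' * diagonal σ * Vᵀ + U * diagonal σ' * Vᵀ + U * diagonal σ * V'ᵀ)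
    (hσ_ne : ∀ r, σ r ≠ 0) (hσ_distinct : ∀ r r', r ≠ r' → σ r ^ 2 ≠ σ r' ^ 2) :
    V' = V * invSqGapMatrix σ ⊙ (diagonal σ * Uᵀ * W' * V + Vᵀ * W'ᵀ * U * diagonal σ) +
      (1 - V * Vᵀ) * W'ᵀ * U * (diagonal σ)⁻¹ := by
  have hW'T : W'ᵀ = V' * diagonal σ * Uᵀ + V * diagonal σ' * Uᵀ + V * diagonal σ * U'ᵀ := by
    simp only [hW', transpose_add, transpose_mul, transpose_transpose, diagonal_transpose,
      Matrix.mul_assoc]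
    abel
  have h := svd_left_deriv_eq hV hU hVskew hUskew hW'T hσ_ne hσ_distinct
  rwa [transpose_transpose, add_comm (Vᵀ * W'ᵀ * U * diagonal σ)] at h

end SVDAlgebra

theorem stmt12_general {d d' : ℕ}
    (I : Set ℝ) (hI_open : IsOpen I)
    (W W' : ℝ → Matrix (Fin d) (Fin d') ℝ)
    (U U' : ℝ → Matrix (Fin d) (Fin (min d d')) ℝ)
    (σ σ' : ℝ → Fin (min d d') → ℝ)
    (V V' : ℝ → Matrix (Fin d') (Fin (min d d')) ℝ)
    (hW : ∀ t ∈ I, ∀ p q, HasDerivAt (fun s => W s p q) (W' t p q) t)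
    (hU : ∀ t ∈ I, ∀ p q, HasDerivAt (fun s => U s p q) (U' t p q) t)
    (hσ : ∀ t ∈ I, ∀ r, HasDerivAt (fun s => σ s r) (σ' t r) t)
    (hV : ∀ t ∈ I, ∀ p q, HasDerivAt (fun s => V s p q) (V' t p q) t)
    (hSVD : ∀ t ∈ I, W t = U t * Matrix.diagonal (σ t) * (V t)ᵀ)
    (hUorth : ∀ t ∈ I, (U t)ᵀ * U t = 1)
    (hVorth : ∀ t ∈ I, (V t)ᵀ * V t = 1)
    (t : ℝ) (ht : t ∈ I)
    (hσ_ne : ∀ r, σ t r ≠ 0)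
    (hσ_distinct : ∀ r r', r ≠ r' → σ t r ^ 2 ≠ σ t r' ^ 2) :
    let S : Matrix (Fin (min d d')) (Fin (min d d')) ℝ := Matrix.diagonal (σ t)
    let H : Matrix (Fin (min d d')) (Fin (min d d')) ℝ :=
      Matrix.of fun r r' => if r = r' then 0 else (σ t r' ^ 2 - σ t r ^ 2)⁻¹
    U' t = U t * Matrix.hadamard H
        ((U t)ᵀ * W' t * V t * S + S * (V t)ᵀ * (W' t)ᵀ * U t) +
      ((1 : Matrix (Fin d) (Fin d) ℝ) - U t * (U t)ᵀ) * W' t * V t * S⁻¹ ∧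
    V' t = V t * Matrix.hadamard H
        (S * (U t)ᵀ * W' t * V t + (V t)ᵀ * (W' t)ᵀ * U t * S) +
      ((1 : Matrix (Fin d') (Fin d') ℝ) - V t * (V t)ᵀ) * (W' t)ᵀ * U t * S⁻¹ := by
  intro S H
  have hnhds : ∀ᶠ s in 𝓝 t, s ∈ I := hI_open.mem_nhds ht
  have hWt : HasEntrywiseDerivAt W (W' t) t := hW t ht
  have hUt : HasEntrywiseDerivAt U (U' t) t := hU t ht
  have hVt : HasEntrywiseDerivAt V (V' t) t := hV t ht
  have hW'_eq :
      W' t = U' t * S * (V t)ᵀ + U t * diagonal (σ' t) * (V t)ᵀ + U t * S * (V' t)ᵀ := by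
    rw [← Matrix.add_mul]
    exact hWt.unique ((hUt.mul (hasEntrywiseDerivAt_diagonal (hσ t ht))).mul hVt.transpose)
      (hnhds.mono hSVD)
  have hUskew := hUt.transpose_mul_skew (hnhds.mono hUorth)
  have hVskew := hVt.transpose_mul_skew (hnhds.mono hVorth)
  exact ⟨svd_left_deriv_eq (hUorth t ht) (hVorth t ht) hUskew hVskew hW'_eq hσ_ne hσ_distinct,
    svd_right_deriv_eq (hUorth t ht) (hVorth t ht) hUskew hVskew hW'_eq hσ_ne hσ_distinct⟩

/-- Evolution of singular vectors along a differentiable SVD path: at any time where the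
singular values are nonzero and have pairwise distinct squares,
`U′ = U·(H ⊙ [UᵀW′VS + SVᵀW′ᵀU]) + (I − UUᵀ)·W′·V·S⁻¹` and
`V′ = V·(H ⊙ [SUᵀW′V + VᵀW′ᵀUS]) + (I − VVᵀ)·W′ᵀ·U·S⁻¹`, where
`H_{r,r'} = (σ_{r'}² − σ_r²)⁻¹` off the diagonal and `0` on it. -/
theorem stmt12 {d d' : ℕ}
    (I : Set ℝ) (hI_open : IsOpen I) (hI_conn : I.OrdConnected)
    (W W' : ℝ → Matrix (Fin d) (Fin d') ℝ)
    (U U' : ℝ → Matrix (Fin d) (Fin (min d d')) ℝ)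
    (σ σ' : ℝ → Fin (min d d') → ℝ)
    (V V' : ℝ → Matrix (Fin d') (Fin (min d d')) ℝ)
    (hW : ∀ t ∈ I, ∀ p q, HasDerivAt (fun s => W s p q) (W' t p q) t)
    (hU : ∀ t ∈ I, ∀ p q, HasDerivAt (fun s => U s p q) (U' t p q) t)
    (hσ : ∀ t ∈ I, ∀ r, HasDerivAt (fun s => σ s r) (σ' t r) t)
    (hV : ∀ t ∈ I, ∀ p q, HasDerivAt (fun s => V s p q) (V' t p q) t)
    (hSVD : ∀ t ∈ I, W t = U t * Matrix.diagonal (σ t) * (V t)ᵀ)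
    (hUorth : ∀ t ∈ I, (U t)ᵀ * U t = 1)
    (hVorth : ∀ t ∈ I, (V t)ᵀ * V t = 1)
    (t : ℝ) (ht : t ∈ I)
    (hσ_ne : ∀ r, σ t r ≠ 0)
    (hσ_distinct : ∀ r r', r ≠ r' → σ t r ^ 2 ≠ σ t r' ^ 2) :
    let S : Matrix (Fin (min d d')) (Fin (min d d')) ℝ := Matrix.diagonal (σ t)
    let H : Matrix (Fin (min d d')) (Fin (min d d')) ℝ :=
      Matrix.of fun r r' => if r = r' then 0 else (σ t r' ^ 2 - σ t r ^ 2)⁻¹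
    U' t = U t * Matrix.hadamard H
        ((U t)ᵀ * W' t * V t * S + S * (V t)ᵀ * (W' t)ᵀ * U t) +
      ((1 : Matrix (Fin d) (Fin d) ℝ) - U t * (U t)ᵀ) * W' t * V t * S⁻¹ ∧
    V' t = V t * Matrix.hadamard H
        (S * (U t)ᵀ * W' t * V t + (V t)ᵀ * (W' t)ᵀ * U t * S) +
      ((1 : Matrix (Fin d') (Fin d') ℝ) - V t * (V t)ᵀ) * (W' t)ᵀ * U t * S⁻¹ :=
  stmt12_general I hI_open W W' U U' σ σ' V V' hW hU hσ hV hSVD hUorth hVorth t ht hσ_ne hσ_distinct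
end

section
/- Let N ≥ 3 be an integer, c₁, c₂ ∈ ℝ, h : I → ℝ a function on an open interval I, and let σ₁, σ₂ : I → ℝ be differentiable and strictly positive functions satisfying σ_i′(t) = −N · (σ_i(t)²)^{1−1/N} · c_i · h(t) for i = 1, 2 and all t ∈ I. Then the quantity t ↦ c₂ · σ₁(t)^{−(N−2)/N} − c₁ · σ₂(t)^{−(N−2)/N} is constant on I. (Consequently, for a depth-N factorization with N ≥ 3 and stationary singular vectors, each singular value is determined by any other up to an additive constant in the coordinates σ ↦ σ^{−(N−2)/N}.) -/
/-!
Along the flow `σ' = -N (σ²)^(1-1/N) · c h`, the chain rule gives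
`(σ^(-(N-2)/N))' = (N-2) · c h`: the power of `σ` in the flow exactly cancels the one produced
by differentiating `σ^(-(N-2)/N)`. Hence `c₂ σ₁^(-(N-2)/N) - c₁ σ₂^(-(N-2)/N)` has derivative
`(N-2)(c₂ c₁ h - c₁ c₂ h) = 0` on the interval, so it is constant there.
-/

theorem Set.OrdConnected.eq_of_hasDerivAt_eq_zero {E : Type*} [NormedAddCommGroup E]
    [NormedSpace ℝ E] {f : ℝ → E} {I : Set ℝ} (hI : I.OrdConnected)
    (hf : ∀ t ∈ I, HasDerivAt f 0 t) {x y : ℝ} (hx : x ∈ I) (hy : y ∈ I) : f x = f y := by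
  have h := hI.convex.norm_image_sub_le_of_norm_hasDerivWithin_le
    (fun t ht => (hf t ht).hasDerivWithinAt) (fun _ _ => norm_zero.le) hx hy
  rw [zero_mul, norm_le_zero_iff, sub_eq_zero] at h
  exact h.symm

theorem HasDerivAt.rpow_neg_of_powerFlow {σ : ℝ → ℝ} {N g t : ℝ} (hN : N ≠ 0) (hσ : 0 < σ t)
    (hd : HasDerivAt σ (-N * (σ t ^ 2) ^ (1 - 1 / N) * g) t) :
    HasDerivAt (fun s => σ s ^ (-((N - 2) / N))) ((N - 2) * g) t := by
  have hsq : (σ t ^ 2) ^ (1 - 1 / N) = σ t ^ (2 * (1 - 1 / N)) := by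
    rw [← Real.rpow_natCast, ← Real.rpow_mul hσ.le, Nat.cast_ofNat]
  have hexp : 2 * (1 - 1 / N) + (-((N - 2) / N) - 1) = 0 := by
    field_simp
    ring
  refine (hd.rpow_const (Or.inl hσ.ne')).congr_deriv ?_
  calc -N * (σ t ^ 2) ^ (1 - 1 / N) * g * -((N - 2) / N) * σ t ^ (-((N - 2) / N) - 1)
      = (N - 2) * g * (σ t ^ (2 * (1 - 1 / N)) * σ t ^ (-((N - 2) / N) - 1)) := by
        rw [hsq]
        field_simp
    _ = (N - 2) * g := by rw [← Real.rpow_add hσ, hexp, Real.rpow_zero, mul_one]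

theorem stmt15_general (N : ℕ) (hN : 3 ≤ N) (c₁ c₂ : ℝ)
    (I : Set ℝ) (hI_conn : I.OrdConnected)
    (h : ℝ → ℝ) (σ₁ σ₂ : ℝ → ℝ)
    (hpos₁ : ∀ t ∈ I, 0 < σ₁ t) (hpos₂ : ∀ t ∈ I, 0 < σ₂ t)
    (hd₁ : ∀ t ∈ I, HasDerivAt σ₁
      (-(N : ℝ) * (σ₁ t ^ 2) ^ (1 - 1 / (N : ℝ)) * (c₁ * h t)) t)
    (hd₂ : ∀ t ∈ I, HasDerivAt σ₂
      (-(N : ℝ) * (σ₂ t ^ 2) ^ (1 - 1 / (N : ℝ)) * (c₂ * h t)) t) :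
    ∀ t ∈ I, ∀ t' ∈ I,
      c₂ * σ₁ t ^ (-(((N : ℝ) - 2) / N)) - c₁ * σ₂ t ^ (-(((N : ℝ) - 2) / N)) =
      c₂ * σ₁ t' ^ (-(((N : ℝ) - 2) / N)) - c₁ * σ₂ t' ^ (-(((N : ℝ) - 2) / N)) := by
  have hN0 : (N : ℝ) ≠ 0 := Nat.cast_ne_zero.mpr (by omega)
  have hconserved : ∀ t ∈ I, HasDerivAt
      (fun s => c₂ * σ₁ s ^ (-(((N : ℝ) - 2) / N)) - c₁ * σ₂ s ^ (-(((N : ℝ) - 2) / N))) 0 t :=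
    fun t ht =>
      ((((hd₁ t ht).rpow_neg_of_powerFlow hN0 (hpos₁ t ht)).const_mul c₂).sub
        (((hd₂ t ht).rpow_neg_of_powerFlow hN0 (hpos₂ t ht)).const_mul c₁)).congr_deriv
        (by ring)
  intro t ht t' ht'
  exact hI_conn.eq_of_hasDerivAt_eq_zero hconserved ht ht'

/-- Conserved quantity for depth `N ≥ 3`: if two strictly positive singular values
evolve by `σᵢ′(t) = −N·(σᵢ(t)²)^(1−1/N)·cᵢ·h(t)` on an open interval `I`, then
`c₂·σ₁(t)^(−(N−2)/N) − c₁·σ₂(t)^(−(N−2)/N)` is constant on `I`. -/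
theorem stmt15 (N : ℕ) (hN : 3 ≤ N) (c₁ c₂ : ℝ)
    (I : Set ℝ) (hI_open : IsOpen I) (hI_conn : I.OrdConnected)
    (h : ℝ → ℝ) (σ₁ σ₂ : ℝ → ℝ)
    (hpos₁ : ∀ t ∈ I, 0 < σ₁ t) (hpos₂ : ∀ t ∈ I, 0 < σ₂ t)
    (hd₁ : ∀ t ∈ I, HasDerivAt σ₁
      (-(N : ℝ) * (σ₁ t ^ 2) ^ (1 - 1 / (N : ℝ)) * (c₁ * h t)) t)
    (hd₂ : ∀ t ∈ I, HasDerivAt σ₂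
      (-(N : ℝ) * (σ₂ t ^ 2) ^ (1 - 1 / (N : ℝ)) * (c₂ * h t)) t) :
    ∀ t ∈ I, ∀ t' ∈ I,
      c₂ * σ₁ t ^ (-(((N : ℝ) - 2) / N)) - c₁ * σ₂ t ^ (-(((N : ℝ) - 2) / N)) =
      c₂ * σ₁ t' ^ (-(((N : ℝ) - 2) / N)) - c₁ * σ₂ t' ^ (-(((N : ℝ) - 2) / N)) :=
  stmt15_general N hN c₁ c₂ I hI_conn h σ₁ σ₂ hpos₁ hpos₂ hd₁ hd₂
end

section
/- Let c₁, c₂ ∈ ℝ, h : I → ℝ a function on an open interval I, and let σ₁, σ₂ : I → ℝ be differentiable and strictly positive functions satisfying σ_i′(t) = −2 · σ_i(t) · c_i · h(t) for i = 1, 2 and all t ∈ I. Then the quantity t ↦ c₂ · log σ₁(t) − c₁ · log σ₂(t) is constant on I; equivalently, σ₁(t)^{c₂} / σ₂(t)^{c₁} is constant on I. (This is the depth-2 case: one singular value grows as a fixed power of the other.) -/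
/-!
Each `σᵢ` is positive, so `log σᵢ` is differentiable with derivative `-2·cᵢ·h`. The
combination `c₂·log σ₁ − c₁·log σ₂` therefore has derivative
`c₂·(−2c₁h) − c₁·(−2c₂h) = 0` on the interval, hence is constant there by the mean value
theorem; exponentiating gives the constancy of `σ₁^c₂ / σ₂^c₁`.
-/

open Real

theorem Convex.is_const_of_hasDerivAt_eq_zero {E : Type*} [NormedAddCommGroup E]
    [NormedSpace ℝ E] {s : Set ℝ} {f : ℝ → E} (hs : Convex ℝ s)
    (hf : ∀ x ∈ s, HasDerivAt f 0 x) {x y : ℝ} (hx : x ∈ s) (hy : y ∈ s) : f x = f y := by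
  have h := hs.norm_image_sub_le_of_norm_hasDerivWithin_le
    (fun z hz => (hf z hz).hasDerivWithinAt) (fun _ _ => norm_zero.le) hx hy
  rw [zero_mul, norm_le_zero_iff, sub_eq_zero] at h
  exact h.symm

theorem HasDerivAt.log_of_eq_mul {f : ℝ → ℝ} {x k : ℝ} (hf : HasDerivAt f (f x * k) x)
    (hx : f x ≠ 0) : HasDerivAt (fun y => Real.log (f y)) k x := by
  convert hf.log hx using 1
  field_simp

theorem rpow_div_rpow_eq_exp {a b : ℝ} (ha : 0 < a) (hb : 0 < b) (p q : ℝ) :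
    a ^ p / b ^ q = exp (p * log a - q * log b) := by
  rw [rpow_def_of_pos ha, rpow_def_of_pos hb, ← exp_sub, mul_comm p, mul_comm q]

theorem hasDerivAt_mul_log_sub_mul_log_eq_zero {c₁ c₂ t : ℝ} {h σ₁ σ₂ : ℝ → ℝ}
    (hpos₁ : 0 < σ₁ t) (hpos₂ : 0 < σ₂ t)
    (hd₁ : HasDerivAt σ₁ (-(2 : ℝ) * σ₁ t * (c₁ * h t)) t)
    (hd₂ : HasDerivAt σ₂ (-(2 : ℝ) * σ₂ t * (c₂ * h t)) t) :
    HasDerivAt (fun s => c₂ * log (σ₁ s) - c₁ * log (σ₂ s)) 0 t := by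
  have hlog₁ : HasDerivAt (fun s => log (σ₁ s)) (-2 * c₁ * h t) t :=
    HasDerivAt.log_of_eq_mul
      (hd₁.congr_deriv (by ring : _ = σ₁ t * (-2 * c₁ * h t))) hpos₁.ne'
  have hlog₂ : HasDerivAt (fun s => log (σ₂ s)) (-2 * c₂ * h t) t :=
    HasDerivAt.log_of_eq_mul
      (hd₂.congr_deriv (by ring : _ = σ₂ t * (-2 * c₂ * h t))) hpos₂.ne'
  exact ((hlog₁.const_mul c₂).sub (hlog₂.const_mul c₁)).congr_deriv (by ring)

theorem stmt16_general (c₁ c₂ : ℝ)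
    (I : Set ℝ) (hI_conn : I.OrdConnected)
    (h : ℝ → ℝ) (σ₁ σ₂ : ℝ → ℝ)
    (hpos₁ : ∀ t ∈ I, 0 < σ₁ t) (hpos₂ : ∀ t ∈ I, 0 < σ₂ t)
    (hd₁ : ∀ t ∈ I, HasDerivAt σ₁ (-(2 : ℝ) * σ₁ t * (c₁ * h t)) t)
    (hd₂ : ∀ t ∈ I, HasDerivAt σ₂ (-(2 : ℝ) * σ₂ t * (c₂ * h t)) t) :
    (∀ t ∈ I, ∀ t' ∈ I,
      c₂ * Real.log (σ₁ t) - c₁ * Real.log (σ₂ t) =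
      c₂ * Real.log (σ₁ t') - c₁ * Real.log (σ₂ t')) ∧
    (∀ t ∈ I, ∀ t' ∈ I,
      σ₁ t ^ c₂ / σ₂ t ^ c₁ = σ₁ t' ^ c₂ / σ₂ t' ^ c₁) := by
  have hconst : ∀ t ∈ I, ∀ t' ∈ I,
      c₂ * log (σ₁ t) - c₁ * log (σ₂ t) = c₂ * log (σ₁ t') - c₁ * log (σ₂ t') :=
    fun t ht t' ht' => hI_conn.convex.is_const_of_hasDerivAt_eq_zero (fun s hs =>
      hasDerivAt_mul_log_sub_mul_log_eq_zero (hpos₁ s hs) (hpos₂ s hs) (hd₁ s hs) (hd₂ s hs))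
      ht ht'
  refine ⟨hconst, fun t ht t' ht' => ?_⟩
  rw [rpow_div_rpow_eq_exp (hpos₁ t ht) (hpos₂ t ht),
    rpow_div_rpow_eq_exp (hpos₁ t' ht') (hpos₂ t' ht'), hconst t ht t' ht']

/-- Conserved quantity for depth 2: if two strictly positive singular values evolve by
`σᵢ′(t) = −2·σᵢ(t)·cᵢ·h(t)` on an open interval `I`, then
`c₂·log σ₁(t) − c₁·log σ₂(t)` is constant on `I`; equivalently,
`σ₁(t)^c₂ / σ₂(t)^c₁` is constant on `I`. -/
theorem stmt16 (c₁ c₂ : ℝ)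
    (I : Set ℝ) (hI_open : IsOpen I) (hI_conn : I.OrdConnected)
    (h : ℝ → ℝ) (σ₁ σ₂ : ℝ → ℝ)
    (hpos₁ : ∀ t ∈ I, 0 < σ₁ t) (hpos₂ : ∀ t ∈ I, 0 < σ₂ t)
    (hd₁ : ∀ t ∈ I, HasDerivAt σ₁ (-(2 : ℝ) * σ₁ t * (c₁ * h t)) t)
    (hd₂ : ∀ t ∈ I, HasDerivAt σ₂ (-(2 : ℝ) * σ₂ t * (c₂ * h t)) t) :
    (∀ t ∈ I, ∀ t' ∈ I,
      c₂ * Real.log (σ₁ t) - c₁ * Real.log (σ₂ t) =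
      c₂ * Real.log (σ₁ t') - c₁ * Real.log (σ₂ t')) ∧
    (∀ t ∈ I, ∀ t' ∈ I,
      σ₁ t ^ c₂ / σ₂ t ^ c₁ = σ₁ t' ^ c₂ / σ₂ t' ^ c₁) :=
  stmt16_general c₁ c₂ I hI_conn h σ₁ σ₂ hpos₁ hpos₂ hd₁ hd₂
end

section
/- Let N ≥ 3 be an integer, α > 0, g : [0,∞) → ℝ a continuous function, and s : [0,∞) → ℝ a differentiable function with s(0) = α^N and s′(t) = −N · (s(t)²)^{(N−1)/N} · g(t) for all t ≥ 0. Then s(t) > 0 for all t ≥ 0, and for all t ≥ 0: s(t)^{−(N−2)/N} = α^{−(N−2)} + (N−2) · ∫₀ᵗ g(τ) dτ; equivalently, s(t) = α^N · (1 + (N−2) · α^{N−2} · ∫₀ᵗ g(τ) dτ)^{−N/(N−2)} (and in particular 1 + (N−2)·α^{N−2}·∫₀ᵗ g(τ) dτ > 0 for all t ≥ 0). -/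
open Set intervalIntegral

/-- Algebraic identity for the rpow manipulation in the ODE. -/
lemma stmt17_key (c : ℝ) (hc : 3 ≤ c) (x G : ℝ) (hx : 0 < x) :
    (-((c - 2) / c)) * x ^ ((-((c - 2) / c)) - 1) * (-c * (x ^ 2) ^ ((c - 1) / c) * G)
      = (c - 2) * G := by
  have hc0 : (0 : ℝ) < c := by linarith
  have h1 : ((x ^ 2 : ℝ)) ^ ((c - 1) / c) = x ^ (2 * ((c - 1) / c)) := by
    rw [← Real.rpow_natCast x 2, ← Real.rpow_mul hx.le]
    norm_num
  have h2 : x ^ ((-((c - 2) / c)) - 1) * x ^ (2 * ((c - 1) / c)) = 1 := by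
    rw [← Real.rpow_add hx, show (-((c - 2) / c)) - 1 + 2 * ((c - 1) / c) = 0 by
      field_simp; ring, Real.rpow_zero]
  have h3 : (-((c - 2) / c)) * (-c) = c - 2 := by field_simp
  calc (-((c - 2) / c)) * x ^ ((-((c - 2) / c)) - 1) * (-c * (x ^ 2) ^ ((c - 1) / c) * G)
      = ((-((c - 2) / c)) * (-c)) * (x ^ ((-((c - 2) / c)) - 1) * x ^ (2 * ((c - 1) / c))) * G := by
        rw [h1]; ring
    _ = (c - 2) * G := by rw [h2, h3]; ring

/-- Closed-form solution of the scalar IVP `s(0) = αᴺ`,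
`s′(t) = −N·(s(t)²)^((N−1)/N)·g(t)` for depth `N ≥ 3` and `α > 0`: the solution stays
positive and satisfies `s(t)^(−(N−2)/N) = α^(−(N−2)) + (N−2)·∫₀ᵗ g`, equivalently
`s(t) = αᴺ·(1 + (N−2)·α^(N−2)·∫₀ᵗ g)^(−N/(N−2))`, the base being positive. -/
theorem stmt17 (N : ℕ) (hN : 3 ≤ N) (α : ℝ) (hα : 0 < α)
    (g s : ℝ → ℝ)
    (hg : ContinuousOn g (Set.Ici 0))
    (hs0 : s 0 = α ^ N)
    (hs : ∀ t : ℝ, 0 ≤ t → HasDerivAt s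
      (-(N : ℝ) * (s t ^ 2) ^ (((N : ℝ) - 1) / N) * g t) t) :
    ∀ t : ℝ, 0 ≤ t →
      0 < s t ∧
      s t ^ (-(((N : ℝ) - 2) / N)) =
        α ^ (-((N : ℝ) - 2)) + ((N : ℝ) - 2) * ∫ τ in (0 : ℝ)..t, g τ ∧
      0 < 1 + ((N : ℝ) - 2) * α ^ ((N : ℝ) - 2) * ∫ τ in (0 : ℝ)..t, g τ ∧
      s t = α ^ N *
        (1 + ((N : ℝ) - 2) * α ^ ((N : ℝ) - 2) * ∫ τ in (0 : ℝ)..t, g τ) ^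
          (-((N : ℝ) / ((N : ℝ) - 2))) := by
  set c : ℝ := (N : ℝ) with hcdef
  have hc : (3 : ℝ) ≤ c := by rw [hcdef]; exact_mod_cast hN
  have hc0 : (0 : ℝ) < c := by linarith
  have hc2 : (0 : ℝ) < c - 2 := by linarith
  have hcne : c ≠ 0 := hc0.ne'
  have hc2ne : c - 2 ≠ 0 := hc2.ne'
  set r : ℝ := -((c - 2) / c) with hrdef
  have hrne : r ≠ 0 := by
    rw [hrdef]
    intro h
    have := neg_eq_zero.mp h
    rw [div_eq_zero_iff] at this
    rcases this with h1 | h1 <;> [exact hc2ne h1; exact hcne h1]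
  set A : ℝ → ℝ := fun t => α ^ (-(c - 2)) + (c - 2) * ∫ τ in (0 : ℝ)..t, g τ with hAdef
  have hs00 : 0 < s 0 := by rw [hs0]; positivity
  have hs0r : s 0 ^ r = α ^ (-(c - 2)) := by
    rw [hs0, ← Real.rpow_natCast α N, ← Real.rpow_mul hα.le]
    congr 1
    rw [hrdef, hcdef]
    field_simp
  -- the FTC identity on intervals of positivity
  have ident : ∀ t : ℝ, 0 ≤ t → (∀ u ∈ Icc (0 : ℝ) t, 0 < s u) → s t ^ r = A t := by
    intro t ht hpos
    have huIcc : uIcc (0 : ℝ) t = Icc 0 t := uIcc_of_le ht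
    have hderiv : ∀ u ∈ uIcc (0 : ℝ) t,
        HasDerivAt (fun v => s v ^ r) ((c - 2) * g u) u := by
      intro u hu
      rw [huIcc] at hu
      have hsu := hpos u hu
      have h := (hs u hu.1).rpow_const (p := r) (Or.inl hsu.ne')
      have hkey := stmt17_key c hc (s u) (g u) hsu
      rw [← hrdef] at hkey
      convert h using 1
      rw [← hkey]
      ring
    have hgint : IntervalIntegrable (fun u => (c - 2) * g u) MeasureTheory.volume 0 t := by
      apply ContinuousOn.intervalIntegrable
      apply continuousOn_const.mul
      apply hg.mono
      rw [huIcc]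
      exact fun x hx => hx.1
    have hFTC := integral_eq_sub_of_hasDerivAt hderiv hgint
    rw [intervalIntegral.integral_const_mul] at hFTC
    show s t ^ r = α ^ (-(c - 2)) + (c - 2) * ∫ τ in (0 : ℝ)..t, g τ
    rw [← hs0r]
    linarith
  -- positivity of s on [0, ∞)
  have hpos : ∀ t : ℝ, 0 ≤ t → 0 < s t := by
    intro T hT
    by_contra hcon
    push_neg at hcon
    set B : Set ℝ := Icc (0 : ℝ) T ∩ s ⁻¹' Iic 0 with hBdef
    have hscont : ContinuousOn s (Icc (0 : ℝ) T) := fun u hu =>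
      ((hs u hu.1).continuousAt).continuousWithinAt
    have hBclosed : IsClosed B := hscont.preimage_isClosed_of_isClosed isClosed_Icc isClosed_Iic
    have hBne : B.Nonempty := ⟨T, ⟨hT, le_refl T⟩, hcon⟩
    have hBbdd : BddBelow B := ⟨0, fun x hx => hx.1.1⟩
    set t₀ : ℝ := sInf B with ht₀def
    have ht₀B : t₀ ∈ B := hBclosed.csInf_mem hBne hBbdd
    have ht₀0 : 0 ≤ t₀ := ht₀B.1.1
    have hst₀ : s t₀ ≤ 0 := ht₀B.2
    have ht₀pos : 0 < t₀ := by
      rcases lt_or_eq_of_le ht₀0 with h | h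
      · exact h
      · exfalso; rw [← h] at hst₀; linarith [hs00]
    have hposIco : ∀ u ∈ Ico (0 : ℝ) t₀, 0 < s u := by
      intro u hu
      by_contra hsu
      push_neg at hsu
      have huB : u ∈ B := ⟨⟨hu.1, le_trans hu.2.le ht₀B.1.2⟩, hsu⟩
      have := csInf_le hBbdd huB
      rw [← ht₀def] at this
      linarith [hu.2]
    set p : ℝ := c / (c - 2) with hpdef
    have hppos : 0 < p := by rw [hpdef]; positivity
    have hIco : ∀ u ∈ Ico (0 : ℝ) t₀, s u ^ r = A u ∧ 0 < A u := by
      intro u hu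
      have h1 : ∀ v ∈ Icc (0 : ℝ) u, 0 < s v := fun v hv =>
        hposIco v ⟨hv.1, lt_of_le_of_lt hv.2 hu.2⟩
      have h2 := ident u hu.1 h1
      refine ⟨h2, ?_⟩
      rw [← h2]
      exact Real.rpow_pos_of_pos (hposIco u hu) r
    have hone : ∀ u ∈ Ico (0 : ℝ) t₀, s u * A u ^ p = 1 := by
      intro u hu
      obtain ⟨h2, hApos⟩ := hIco u hu
      have hsu := hposIco u hu
      have hsurec : s u = A u ^ (1 / r) := by
        have hh : (s u ^ r) ^ (1 / r) = s u := by
          rw [← Real.rpow_mul hsu.le, mul_one_div, div_self hrne, Real.rpow_one]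
        rw [← hh, h2]
      rw [hsurec, ← Real.rpow_add hApos]
      rw [show 1 / r + p = 0 by rw [hrdef, hpdef, one_div, inv_neg, inv_div]; ring]
      exact Real.rpow_zero _
    -- continuity of A on [0, t₀]
    have hgint : MeasureTheory.IntegrableOn g (uIcc (0 : ℝ) t₀) MeasureTheory.volume := by
      rw [uIcc_of_le ht₀0]
      apply ContinuousOn.integrableOn_Icc
      exact hg.mono (fun x hx => hx.1)
    have hAcont : ContinuousOn A (Icc (0 : ℝ) t₀) := by
      rw [hAdef]
      apply continuousOn_const.add
      apply continuousOn_const.mul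
      have hpr := intervalIntegral.continuousOn_primitive_interval (f := g)
        (a := (0 : ℝ)) (b := t₀) (μ := MeasureTheory.volume) hgint
      rwa [uIcc_of_le ht₀0] at hpr
    have hAt₀ : ContinuousWithinAt A (Ico (0 : ℝ) t₀) t₀ :=
      (hAcont t₀ ⟨ht₀0, le_refl _⟩).mono Ico_subset_Icc_self
    have hst₀cont : ContinuousWithinAt s (Ico (0 : ℝ) t₀) t₀ :=
      ((hs t₀ ht₀0).continuousAt).continuousWithinAt
    have hrpowcont : ContinuousAt (fun x : ℝ => x ^ p) (A t₀) :=
      Real.continuousAt_rpow_const _ _ (Or.inr hppos.le)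
    have hhcont : ContinuousWithinAt (fun u => s u * A u ^ p) (Ico (0 : ℝ) t₀) t₀ :=
      hst₀cont.mul (hrpowcont.comp_continuousWithinAt hAt₀)
    haveI hne : (nhdsWithin t₀ (Ico (0 : ℝ) t₀)).NeBot := by
      apply mem_closure_iff_nhdsWithin_neBot.mp
      rw [closure_Ico (ne_of_lt ht₀pos)]
      exact ⟨ht₀0, le_refl _⟩
    have hlim : Filter.Tendsto (fun u => s u * A u ^ p) (nhdsWithin t₀ (Ico (0 : ℝ) t₀))
        (nhds (s t₀ * A t₀ ^ p)) := hhcont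
    have hlim1 : Filter.Tendsto (fun u => s u * A u ^ p) (nhdsWithin t₀ (Ico (0 : ℝ) t₀))
        (nhds 1) := by
      apply Filter.Tendsto.congr' _ tendsto_const_nhds
      filter_upwards [self_mem_nhdsWithin] with u hu
      exact (hone u hu).symm
    have heq1 : s t₀ * A t₀ ^ p = 1 := tendsto_nhds_unique hlim hlim1
    have hAt₀nonneg : 0 ≤ A t₀ := by
      apply ge_of_tendsto hAt₀
      filter_upwards [self_mem_nhdsWithin] with u hu
      exact (hIco u hu).2.le
    nlinarith [Real.rpow_nonneg hAt₀nonneg p]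
  -- assembly of the conclusions
  intro t ht
  have hst : 0 < s t := hpos t ht
  have hIccpos : ∀ u ∈ Icc (0 : ℝ) t, 0 < s u := fun u hu => hpos u hu.1
  have hE : s t ^ r = α ^ (-(c - 2)) + (c - 2) * ∫ τ in (0 : ℝ)..t, g τ := ident t ht hIccpos
  have hApos : 0 < α ^ (-(c - 2)) + (c - 2) * ∫ τ in (0 : ℝ)..t, g τ := by
    rw [← hE]; exact Real.rpow_pos_of_pos hst r
  set I : ℝ := ∫ τ in (0 : ℝ)..t, g τ with hIdef
  have hα1 : (α : ℝ) ^ (c - 2) * α ^ (-(c - 2)) = 1 := by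
    rw [← Real.rpow_add hα]
    norm_num
  have hbase : 1 + (c - 2) * α ^ (c - 2) * I = α ^ (c - 2) * (α ^ (-(c - 2)) + (c - 2) * I) := by
    rw [mul_add, hα1]; ring
  have hbasepos : 0 < 1 + (c - 2) * α ^ (c - 2) * I := by
    rw [hbase]
    exact mul_pos (Real.rpow_pos_of_pos hα _) hApos
  refine ⟨hst, hE, hbasepos, ?_⟩
  have hq : (α ^ (-(c - 2)) + (c - 2) * I) ^ (-(c / (c - 2))) = s t := by
    rw [← hE, ← Real.rpow_mul hst.le]
    rw [show r * (-(c / (c - 2))) = 1 by rw [hrdef]; field_simp]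
    exact Real.rpow_one _
  have h1 : ((α : ℝ) ^ (c - 2)) ^ (-(c / (c - 2))) = α ^ (-c) := by
    rw [← Real.rpow_mul hα.le]
    congr 1
    field_simp
  have h2 : (α ^ N : ℝ) = α ^ c := by rw [hcdef, Real.rpow_natCast α N]
  rw [hbase, Real.mul_rpow (Real.rpow_nonneg hα.le _) hApos.le, h1, h2, ← mul_assoc,
    ← Real.rpow_add hα, hq]
  rw [show c + -c = 0 by ring, Real.rpow_zero, one_mul]
end
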